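/- arXiv:2306.05366 — 12 statements merged into one kernel-verified Lean document; each statement's English description precedes it below -/
import Mathlib

section
/- Let n ≥ 2 and let P be an n×n real antisymmetric matrix with entries in [−1,1] that is regular and transitive. Let 0 < α < 2/(n(n−1)) and let x_α ∈ (0,1) be the unique positive root of 2·arctanh(x)³ − 3αx. Set P_max := max_{i,j} P_ij and P_min := min{P_ij : P_ij > 0}. Assume P_max < x_α/(n−1) and P_max/P_min < n/(n−2 + n(n−1)α). If ε ∈ ℝⁿ is an Elo rating of P, then for all i,j: P_ij > 0 if and only if ε_i > ε_j (i.e., P and the induced Elo game have the same sign pattern). -/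
open Matrix

noncomputable def sigmoid (x : ℝ) : ℝ := 1 / (1 + Real.exp (-x))

/-- The real inverse hyperbolic tangent on `(-1, 1)`. -/
noncomputable def arctanh (x : ℝ) : ℝ := (1 / 2) * Real.log ((1 + x) / (1 - x))

lemma sigmoid_strictMono : StrictMono sigmoid := by
  intro x y hxy
  unfold sigmoid
  have h1 : (0:ℝ) < 1 + Real.exp (-x) := by positivity
  have h2 : (0:ℝ) < 1 + Real.exp (-y) := by positivity
  have h3 : Real.exp (-y) < Real.exp (-x) := Real.exp_lt_exp.2 (by linarith)
  rw [div_lt_div_iff₀ h1 h2]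
  nlinarith

/-- **Elo ratings preserve transitivity (first part of Theorem 1):**
under the stated bounds on `Pmax` and `Pmax / Pmin`, the Elo rating of a regular
transitive game has the same sign pattern as the game. -/
theorem elo_preserves_transitivity
    (n : ℕ) (hn : 2 ≤ n)
    (P : Matrix (Fin n) (Fin n) ℝ)
    (hanti : Pᵀ = -P)
    (hbdd : ∀ i j, P i j ∈ Set.Icc (-1 : ℝ) 1)
    (hreg : ∀ i j, i ≠ j → P i j ≠ 0)
    (htrans : ∀ i j k, 0 < P i j → 0 < P j k → 0 < P i k)
    (α : ℝ) (hα0 : 0 < α) (hα1 : α < 2 / ((n : ℝ) * ((n : ℝ) - 1)))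
    (xα : ℝ) (hxα : xα ∈ Set.Ioo (0 : ℝ) 1)
    (hroot : 2 * arctanh xα ^ 3 - 3 * α * xα = 0)
    (huniq : ∀ x ∈ Set.Ioo (0 : ℝ) 1, 2 * arctanh x ^ 3 - 3 * α * x = 0 → x = xα)
    (Pmax Pmin : ℝ)
    (hPmax : IsGreatest {x : ℝ | ∃ i j, P i j = x} Pmax)
    (hPmin : IsLeast {x : ℝ | ∃ i j, P i j = x ∧ 0 < x} Pmin)
    (hmax : Pmax < xα / ((n : ℝ) - 1))
    (hratio : Pmax / Pmin < (n : ℝ) / ((n : ℝ) - 2 + (n : ℝ) * ((n : ℝ) - 1) * α))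
    (ε : Fin n → ℝ)
    (helo : ∀ i, ∑ k, sigmoid (ε i - ε k) = ∑ k, (P i k + 1) / 2) :
    ∀ i j, 0 < P i j ↔ ε j < ε i := by
  haveI : NeZero n := ⟨by omega⟩
  have hskew : ∀ a b : Fin n, P b a = - P a b := by
    intro a b
    have := congrFun (congrFun hanti a) b
    simpa [Matrix.transpose_apply] using this
  have hdiag : ∀ a : Fin n, P a a = 0 := fun a => by have := hskew a a; linarith
  have hPminpos : (0:ℝ) < Pmin := by
    obtain ⟨_, _, _, h⟩ := hPmin.1
    exact h
  have hle_max : ∀ a b : Fin n, P a b ≤ Pmax := fun a b => hPmax.2 ⟨a, b, rfl⟩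
  have hmin_le : ∀ a b : Fin n, 0 < P a b → Pmin ≤ P a b :=
    fun a b h => hPmin.2 ⟨a, b, rfl, h⟩
  have hn2 : (2:ℝ) ≤ (n:ℝ) := by exact_mod_cast hn
  have hD1 : (0:ℝ) < (n:ℝ) * ((n:ℝ) - 1) * α :=
    mul_pos (mul_pos (by linarith) (by linarith)) hα0
  have hDpos : (0:ℝ) < (n:ℝ) - 2 + (n:ℝ) * ((n:ℝ) - 1) * α := by linarith
  have hkey : 0 < (n:ℝ) * Pmin - ((n:ℝ) - 2) * Pmax := by
    have h1 : Pmax * ((n:ℝ) - 2 + (n:ℝ) * ((n:ℝ) - 1) * α) < (n:ℝ) * Pmin :=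
      (div_lt_div_iff₀ hPminpos hDpos).1 hratio
    have hPmaxpos : 0 < Pmax := by
      obtain ⟨a, b, hab, h⟩ := hPmin.1
      calc (0:ℝ) < P a b := hab ▸ h
        _ ≤ Pmax := hle_max a b
    have h2 : 0 < Pmax * ((n:ℝ) * ((n:ℝ) - 1) * α) := mul_pos hPmaxpos hD1
    nlinarith [h1, h2]
  -- row sums order
  have hsum : ∀ i j : Fin n, 0 < P i j → ∑ k, P j k < ∑ k, P i k := by
    intro i j hij
    have hij' : i ≠ j := fun h => by rw [h, hdiag] at hij; exact lt_irrefl 0 hij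
    have hterm : ∀ k : Fin n,
        (Pmin - Pmax) + ((if k = i then Pmax else 0) + (if k = j then Pmax else 0))
          ≤ P i k - P j k := by
      intro k
      have hPij := hmin_le i j hij
      split_ifs with h1 h2 h3
      · exact absurd (h1 ▸ h2 : i = j) hij'
      · rw [h1, hdiag, hskew i j]
        linarith
      · rw [h3, hdiag]
        linarith
      · have hki : k ≠ i := h1
        have hkj : k ≠ j := h3
        rw [add_zero]
        have hne : P j k ≠ 0 := hreg j k (fun h => hkj h.symm)
        rcases lt_or_gt_of_ne hne with hneg | hpos
        · have hm : P k i ≤ Pmax := hle_max k i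
          have hm2 : Pmin ≤ P k j := hmin_le k j (by rw [hskew j k]; linarith)
          have e1 := hskew i k
          have e2 := hskew j k
          linarith
        · have hp : 0 < P i k := htrans i j k hij hpos
          have := hmin_le i k hp
          have := hle_max j k
          linarith
    have hsum2 : ∑ k : Fin n,
        ((Pmin - Pmax) + ((if k = i then Pmax else 0) + (if k = j then Pmax else 0)))
          ≤ ∑ k, (P i k - P j k) :=
      Finset.sum_le_sum (fun k _ => hterm k)
    have hLHS : ∑ k : Fin n,
        ((Pmin - Pmax) + ((if k = i then Pmax else 0) + (if k = j then Pmax else 0)))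
          = (n:ℝ) * (Pmin - Pmax) + (Pmax + Pmax) := by
      rw [Finset.sum_add_distrib, Finset.sum_add_distrib, Finset.sum_const,
        Finset.card_univ, Fintype.card_fin, Finset.sum_ite_eq' Finset.univ i,
        Finset.sum_ite_eq' Finset.univ j]
      simp [nsmul_eq_mul]
    have hRHS : ∑ k, (P i k - P j k) = (∑ k, P i k) - ∑ k, P j k :=
      Finset.sum_sub_distrib _ _
    rw [hLHS, hRHS] at hsum2
    nlinarith
  -- Elo part
  have hFmono : StrictMono (fun t : ℝ => ∑ k, sigmoid (t - ε k)) := by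
    intro a b hab
    apply Finset.sum_lt_sum_of_nonempty Finset.univ_nonempty
    intro k _
    exact sigmoid_strictMono (by linarith)
  have hFE : ∀ i, (fun t : ℝ => ∑ k, sigmoid (t - ε k)) (ε i)
      = ((∑ k, P i k) + (n:ℝ)) / 2 := by
    intro i
    have h := helo i
    dsimp only
    rw [h]
    rw [← Finset.sum_div, Finset.sum_add_distrib, Finset.sum_const, Finset.card_univ,
      Fintype.card_fin]
    simp [nsmul_eq_mul]
  have hmono_eps : ∀ i j : Fin n, (∑ k, P j k < ∑ k, P i k) → ε j < ε i := by
    intro i j h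
    have : (fun t : ℝ => ∑ k, sigmoid (t - ε k)) (ε j)
        < (fun t : ℝ => ∑ k, sigmoid (t - ε k)) (ε i) := by
      rw [hFE, hFE]; linarith
    exact hFmono.lt_iff_lt.mp this
  intro i j
  constructor
  · intro h
    exact hmono_eps i j (hsum i j h)
  · intro h
    have hij : i ≠ j := fun he => by subst he; exact lt_irrefl _ h
    rcases lt_or_gt_of_ne (hreg i j hij) with hneg | hpos
    · exfalso
      have hji : 0 < P j i := by rw [hskew i j]; linarith
      exact absurd (hmono_eps j i (hsum j i hji)) (not_lt.2 h.le)
    · exact hpos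
end

section
/- Let n ≥ 2 and let P be an n×n real antisymmetric matrix with entries in [−1,1] that is regular and transitive. Let 0 < α < 2/(n(n−1)), let x_α ∈ (0,1) be the unique positive root of 2·arctanh(x)³ − 3αx, set P_min := min{P_ij : P_ij > 0}, and let β_α := (1/P_min)·arctanh((n−2)/n + (n−1)α). Let φ_β(x) := (1/β)·tanh(βx) and suppose β > max((n−1)/x_α, β_α). If ε ∈ ℝⁿ is an Elo rating of the transformed game φ_β(P) (the matrix with entries tanh(β·P_ij)/β), then for all i,j: P_ij > 0 if and only if ε_i > ε_j. Hence the hyperbolic Elo rating preserves transitivity of P. -/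
open Matrix

lemma tanh_eq' (x : ℝ) : Real.tanh x = (Real.exp (2*x) - 1) / (Real.exp (2*x) + 1) := by
  rw [Real.tanh_eq_sinh_div_cosh, Real.sinh_eq, Real.cosh_eq]
  have h1 : Real.exp x > 0 := Real.exp_pos x
  have h3 : Real.exp (2*x) = Real.exp x * Real.exp x := by
    rw [← Real.exp_add]; ring_nf
  have h4 : Real.exp (-x) = (Real.exp x)⁻¹ := by rw [← Real.exp_neg]
  rw [h3, h4]
  field_simp

lemma tanh_strictMono' : StrictMono Real.tanh := by
  intro x y hxy
  rw [tanh_eq', tanh_eq']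
  have h1 : (0:ℝ) < Real.exp (2*x) + 1 := by positivity
  have h2 : (0:ℝ) < Real.exp (2*y) + 1 := by positivity
  have h3 : Real.exp (2*x) < Real.exp (2*y) := Real.exp_lt_exp.mpr (by linarith)
  rw [div_lt_div_iff₀ h1 h2]
  nlinarith

lemma tanh_lt_one' (x : ℝ) : Real.tanh x < 1 := by
  rw [tanh_eq']
  have h1 : (0:ℝ) < Real.exp (2*x) + 1 := by positivity
  rw [div_lt_one h1]; linarith

lemma neg_one_lt_tanh' (x : ℝ) : -1 < Real.tanh x := by
  rw [tanh_eq']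
  have h1 : (0:ℝ) < Real.exp (2*x) + 1 := by positivity
  have h2 : (0:ℝ) < Real.exp (2*x) := Real.exp_pos _
  rw [lt_div_iff₀ h1]; linarith

lemma tanh_arctanh' {x : ℝ} (h1 : -1 < x) (h2 : x < 1) : Real.tanh (arctanh x) = x := by
  have hq : (0:ℝ) < (1 + x) / (1 - x) := by apply div_pos <;> linarith
  have he : Real.exp (2 * arctanh x) = (1 + x) / (1 - x) := by
    rw [arctanh, show 2 * ((1:ℝ)/2 * Real.log ((1+x)/(1-x))) = Real.log ((1+x)/(1-x)) by ring]
    exact Real.exp_log hq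
  rw [tanh_eq', he]
  have : (1:ℝ) - x ≠ 0 := by linarith
  field_simp
  ring

set_option maxHeartbeats 1600000

/-- **Hyperbolic Elo rating preserves transitivity (Theorem 1):**
for `β` large enough, the Elo rating of the transformed game
`φ_β(P) = tanh (β P) / β` has the same sign pattern as the regular transitive game `P`. -/
theorem hyperbolic_elo_preserves_transitivity
    (n : ℕ) (hn : 2 ≤ n)
    (P : Matrix (Fin n) (Fin n) ℝ)
    (hanti : Pᵀ = -P)
    (hbdd : ∀ i j, P i j ∈ Set.Icc (-1 : ℝ) 1)
    (hreg : ∀ i j, i ≠ j → P i j ≠ 0)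
    (htrans : ∀ i j k, 0 < P i j → 0 < P j k → 0 < P i k)
    (α : ℝ) (hα0 : 0 < α) (hα1 : α < 2 / ((n : ℝ) * ((n : ℝ) - 1)))
    (xα : ℝ) (hxα : xα ∈ Set.Ioo (0 : ℝ) 1)
    (hroot : 2 * arctanh xα ^ 3 - 3 * α * xα = 0)
    (huniq : ∀ x ∈ Set.Ioo (0 : ℝ) 1, 2 * arctanh x ^ 3 - 3 * α * x = 0 → x = xα)
    (Pmin : ℝ)
    (hPmin : IsLeast {x : ℝ | ∃ i j, P i j = x ∧ 0 < x} Pmin)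
    (β : ℝ)
    (hβ : β > max (((n : ℝ) - 1) / xα)
      ((1 / Pmin) * arctanh (((n : ℝ) - 2) / (n : ℝ) + ((n : ℝ) - 1) * α)))
    (ε : Fin n → ℝ)
    (helo : ∀ i, ∑ k, sigmoid (ε i - ε k) = ∑ k, (Real.tanh (β * P i k) / β + 1) / 2) :
    ∀ i j, 0 < P i j ↔ ε j < ε i := by
  -- basic facts
  have hskew : ∀ i j, P j i = - P i j := by
    intro i j
    have := congrFun (congrFun hanti i) j
    simpa [Matrix.transpose_apply] using this
  have hdiag : ∀ i, P i i = 0 := by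
    intro i; have := hskew i i; linarith
  have hn2 : (2:ℝ) ≤ (n:ℝ) := by exact_mod_cast hn
  have hn0 : (0:ℝ) < (n:ℝ) := by linarith
  -- β > 0
  have hxα0 : 0 < xα := hxα.1
  have hβ1 : β > ((n:ℝ) - 1) / xα := lt_of_le_of_lt (le_max_left _ _) hβ
  have hβpos : 0 < β := lt_trans (div_pos (by linarith) hxα0) hβ1
  -- Pmin facts
  obtain ⟨⟨i0, j0, hij0, hij0pos⟩, hPminLB⟩ := hPmin
  have hPminpos : 0 < Pmin := hij0 ▸ hij0pos
  -- the constant c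
  set c : ℝ := ((n : ℝ) - 2) / (n : ℝ) + ((n : ℝ) - 1) * α with hc
  have hc0 : 0 < c := by
    rw [hc]
    have h : (0:ℝ) ≤ ((n:ℝ) - 2) / (n:ℝ) := by
      apply div_nonneg <;> linarith
    nlinarith
  have hc1 : c < 1 := by
    have hnn : (0:ℝ) < (n:ℝ) * ((n:ℝ) - 1) := by nlinarith
    have h2 : α * ((n:ℝ) * ((n:ℝ) - 1)) < 2 := by
      have := (lt_div_iff₀ hnn).mp hα1
      linarith
    rw [hc]
    rw [div_add' _ _ _ (ne_of_gt hn0), div_lt_one hn0]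
    nlinarith
  -- tanh (β * Pmin) > c
  have hβ2 : β > (1 / Pmin) * arctanh c := lt_of_le_of_lt (le_max_right _ _) hβ
  have hβPmin : β * Pmin > arctanh c := by
    have := mul_lt_mul_of_pos_right hβ2 hPminpos
    calc arctanh c = (1 / Pmin) * arctanh c * Pmin := by field_simp
    _ < β * Pmin := this
  have htc : c < Real.tanh (β * Pmin) := by
    calc c = Real.tanh (arctanh c) := (tanh_arctanh' (by linarith) hc1).symm
    _ < Real.tanh (β * Pmin) := tanh_strictMono' hβPmin
  -- positive entries are ≥ Pmin
  have hge : ∀ i j, 0 < P i j → c < Real.tanh (β * P i j) := by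
    intro i j h
    have hle : Pmin ≤ P i j := hPminLB ⟨i, j, rfl, h⟩
    exact lt_of_lt_of_le htc (tanh_strictMono'.monotone (by nlinarith))
  have hle' : ∀ i j, P i j < 0 → Real.tanh (β * P i j) < -c := by
    intro i j h
    have h' : 0 < P j i := by rw [hskew]; linarith
    have := hge j i h'
    have heq : Real.tanh (β * P i j) = - Real.tanh (β * P j i) := by
      rw [show β * P i j = -(β * P j i) by rw [hskew]; ring, Real.tanh_neg]
    rw [heq]; linarith
  -- key: the row sums of tanh(βP) respect the order
  have key : ∀ i j, 0 < P i j →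
      ∑ k, Real.tanh (β * P j k) < ∑ k, Real.tanh (β * P i k) := by
    intro i j hij
    have hijne : i ≠ j := by
      intro h; rw [h, hdiag] at hij; exact lt_irrefl 0 hij
    set f : Fin n → ℝ := fun k => Real.tanh (β * P i k) - Real.tanh (β * P j k) with hf
    -- term bounds
    have hfi : c < f i := by
      have h1 : P j i < 0 := by rw [hskew]; linarith
      have := hle' j i h1
      simp only [hf, hdiag i, mul_zero, Real.tanh_zero]
      linarith
    have hfj : c < f j := by
      have := hge i j hij
      simp only [hf, hdiag j, mul_zero, Real.tanh_zero]
      linarith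
    have hfk : ∀ k, k ≠ i → k ≠ j → c - 1 ≤ f k := by
      intro k hki hkj
      rcases lt_trichotomy (P j k) 0 with h | h | h
      · have h1 := hle' j k h
        have h2 := neg_one_lt_tanh' (β * P i k)
        simp only [hf]; linarith
      · exact absurd h (hreg j k (Ne.symm hkj))
      · have h1 := hge i k (htrans i j k hij h)
        have h2 := tanh_lt_one' (β * P j k)
        simp only [hf]; linarith
    -- sum decomposition
    have hsub : ({i, j} : Finset (Fin n)) ⊆ Finset.univ := Finset.subset_univ _
    have hsplit := Finset.sum_sdiff (f := f) hsub
    have hpair : ∑ k ∈ ({i, j} : Finset (Fin n)), f k = f i + f j :=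
      Finset.sum_pair hijne
    have hcard : (Finset.univ \ ({i, j} : Finset (Fin n))).card = n - 2 := by
      rw [Finset.card_sdiff_of_subset hsub, Finset.card_univ, Fintype.card_fin,
        Finset.card_pair hijne]
    have hrest : ((n : ℝ) - 2) * (c - 1) ≤ ∑ k ∈ Finset.univ \ ({i, j} : Finset (Fin n)), f k := by
      have := Finset.card_nsmul_le_sum (Finset.univ \ ({i, j} : Finset (Fin n))) f (c - 1)
        (fun k hk => by
          simp only [Finset.mem_sdiff, Finset.mem_insert, Finset.mem_singleton] at hk
          exact hfk k (fun h => hk.2 (Or.inl h)) (fun h => hk.2 (Or.inr h)))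
      rw [hcard] at this
      have hcast : ((n - 2 : ℕ) : ℝ) = (n : ℝ) - 2 := by
        rw [Nat.cast_sub hn]; norm_num
      calc ((n : ℝ) - 2) * (c - 1) = ((n - 2 : ℕ) : ℝ) * (c - 1) := by rw [hcast]
      _ = (n - 2 : ℕ) • (c - 1) := by rw [nsmul_eq_mul]
      _ ≤ _ := this
    have hsum : 0 < ∑ k, f k := by
      have h1 : ∑ k, f k = (∑ k ∈ Finset.univ \ ({i, j} : Finset (Fin n)), f k) + (f i + f j) := by
        rw [← hpair, hsplit]
      have hgoal : 2 * c + ((n:ℝ) - 2) * (c - 1) > 0 := by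
        have : 2 * c + ((n:ℝ) - 2) * (c - 1) = (n:ℝ) * c - ((n:ℝ) - 2) := by ring
        rw [this, hc]
        have : (n:ℝ) * (((n : ℝ) - 2) / (n : ℝ) + ((n : ℝ) - 1) * α) =
            ((n:ℝ) - 2) + (n:ℝ) * ((n:ℝ) - 1) * α := by
          field_simp
        rw [this]
        nlinarith [mul_pos (mul_pos hn0 (by linarith : (0:ℝ) < (n:ℝ) - 1)) hα0]
      rw [h1]
      linarith
    have : ∑ k, f k = (∑ k, Real.tanh (β * P i k)) - ∑ k, Real.tanh (β * P j k) := by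
      rw [hf, Finset.sum_sub_distrib]
    linarith [this ▸ hsum]
  -- the Elo map x ↦ ∑ σ(x - ε k) is strictly monotone
  haveI : Nonempty (Fin n) := ⟨⟨0, by omega⟩⟩
  have hg : StrictMono (fun x : ℝ => ∑ k, sigmoid (x - ε k)) := by
    intro x y hxy
    apply Finset.sum_lt_sum_of_nonempty
    · exact Finset.univ_nonempty
    · intro k _
      exact sigmoid_strictMono (by linarith)
  -- rhs comparison transfers via helo
  have hεlt : ∀ i j, 0 < P i j → ε j < ε i := by
    intro i j hij
    have h2β : (0:ℝ) < 2 * β := by linarith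
    have h1 : ∀ m : Fin n, ∑ k, (Real.tanh (β * P m k) / β + 1) / 2 =
        (∑ k, Real.tanh (β * P m k)) / (2 * β) + (n : ℝ) / 2 := by
      intro m
      have he : ∀ k : Fin n, (Real.tanh (β * P m k) / β + 1) / 2 =
          Real.tanh (β * P m k) / (2 * β) + 1 / 2 := by
        intro k; field_simp
      rw [Finset.sum_congr rfl (fun k _ => he k), Finset.sum_add_distrib,
        ← Finset.sum_div, Finset.sum_const, Finset.card_univ, Fintype.card_fin,
        nsmul_eq_mul]
      ring
    have hRi : ∑ k, (Real.tanh (β * P j k) / β + 1) / 2 <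
        ∑ k, (Real.tanh (β * P i k) / β + 1) / 2 := by
      rw [h1 i, h1 j]
      have hk := key i j hij
      have := (div_lt_div_iff_of_pos_right h2β).mpr hk
      linarith
    exact hg.lt_iff_lt.mp (by
      show ∑ k, sigmoid (ε j - ε k) < ∑ k, sigmoid (ε i - ε k)
      rw [helo i, helo j]; exact hRi)
  intro i j
  constructor
  · exact hεlt i j
  · intro hlt
    rcases lt_trichotomy (P i j) 0 with h | h | h
    · have : 0 < P j i := by rw [hskew]; linarith
      have := hεlt j i this
      linarith
    · have hne : i ≠ j := by
        intro he; rw [he] at hlt; exact lt_irrefl _ hlt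
      exact absurd h (hreg i j hne)
    · exact h
end

section
/- Let P be an n×n real antisymmetric matrix. Then the following are equivalent: (1) there exist vectors α, β ∈ ℝⁿ such that the matrix Φ̃ with Φ̃_ij := α_i + β_j satisfies, for all i,j: P_ij > 0 ⇔ Φ̃_ij − Φ̃_jj > 0 ⇔ Φ̃_ji − Φ̃_jj > 0 (i.e., P is a weak separable ordinal potential game); (2) there exists a vector Φ ∈ ℝⁿ such that for all i,j: P_ij > 0 if and only if Φ_i − Φ_j > 0. -/
open Matrix

/-- **Proposition 2:** an antisymmetric game `P` is a weak separable ordinal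
potential game (with separable potential `Φ̃ i j = a i + b j` satisfying the
ordinal potential conditions for unilateral deviations from the diagonal) iff
there is a vector `Φ` with `P i j > 0 ↔ Φ i - Φ j > 0` for all `i, j`. -/
theorem weak_separable_ordinal_potential_iff
    (n : ℕ)
    (P : Matrix (Fin n) (Fin n) ℝ)
    (hanti : Pᵀ = -P) :
    (∃ a b : Fin n → ℝ, ∀ i j,
        (0 < P i j ↔ 0 < (a i + b j) - (a j + b j)) ∧
        (0 < P i j ↔ 0 < (a j + b i) - (a j + b j))) ↔
      ∃ Φ : Fin n → ℝ, ∀ i j, 0 < P i j ↔ 0 < Φ i - Φ j := by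
  constructor
  · rintro ⟨a, b, h⟩
    refine ⟨a, fun i j => ?_⟩
    have := (h i j).1
    constructor
    · intro hx; have := this.mp hx; linarith
    · intro hx; exact this.mpr (by linarith)
  · rintro ⟨Φ, h⟩
    refine ⟨Φ, Φ, fun i j => ⟨?_, ?_⟩⟩ <;> rw [h i j] <;> constructor <;> intro <;> linarith
end

section
/- Let n ≥ 2 and let P be an n×n real antisymmetric matrix with entries in [−1,1] that is regular and transitive. Then the sign-rank of P equals 2; that is, the minimum of rank(Q) over all n×n real antisymmetric matrices Q having the same sign pattern as P is equal to 2. -/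
open Matrix

/-- **Corollary 2.1 (second part):** a regular transitive game has sign-rank two,
i.e. the minimum rank over antisymmetric matrices with the same sign pattern is `2`. -/
theorem signRank_of_regular_transitive_eq_two
    (n : ℕ) (hn : 2 ≤ n)
    (P : Matrix (Fin n) (Fin n) ℝ)
    (hanti : Pᵀ = -P)
    (hbdd : ∀ i j, P i j ∈ Set.Icc (-1 : ℝ) 1)
    (hreg : ∀ i j, i ≠ j → P i j ≠ 0)
    (htrans : ∀ i j k, 0 < P i j → 0 < P j k → 0 < P i k) :
    IsLeast {r : ℕ | ∃ Q : Matrix (Fin n) (Fin n) ℝ,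
      Qᵀ = -Q ∧ (∀ i j, 0 < P i j ↔ 0 < Q i j) ∧ Q.rank = r} 2 := by
  classical
  have hPT : ∀ i j, P j i = -P i j := by
    intro i j
    have := congrFun (congrFun hanti i) j
    simpa using this
  have hdiag : ∀ i, P i i = 0 := by
    intro i
    have := hPT i i
    linarith
  -- the "score" of player i
  set u : Fin n → ℕ := fun i => (Finset.univ.filter (fun j => 0 < P i j)).card with hu
  have hfwd : ∀ i j, 0 < P i j → u j < u i := by
    intro i j h
    have hnot : j ∉ Finset.univ.filter (fun k => 0 < P j k) := by
      simp [hdiag j]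
    have hsub : insert j (Finset.univ.filter (fun k => 0 < P j k)) ⊆
        Finset.univ.filter (fun k => 0 < P i k) := by
      intro k hk
      simp only [Finset.mem_insert, Finset.mem_filter, Finset.mem_univ, true_and] at hk ⊢
      rcases hk with rfl | hk
      · exact h
      · exact htrans i j k h hk
    have := Finset.card_le_card hsub
    rw [Finset.card_insert_of_notMem hnot] at this
    simp only [hu]
    omega
  have key : ∀ i j, 0 < P i j ↔ u j < u i := by
    intro i j
    constructor
    · exact hfwd i j
    · intro h
      have hij : i ≠ j := by rintro rfl; exact lt_irrefl _ h
      rcases (hreg i j hij).lt_or_gt with hneg | hpos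
      · have hji : 0 < P j i := by rw [hPT i j]; linarith
        exact absurd (hfwd j i hji) (by omega)
      · exact hpos
  -- the rank-2 witness
  set Q : Matrix (Fin n) (Fin n) ℝ := Matrix.of (fun i j => (u i : ℝ) - (u j : ℝ)) with hQ
  have hQapp : ∀ i j, Q i j = (u i : ℝ) - (u j : ℝ) := fun i j => rfl
  have hQanti : Qᵀ = -Q := by
    ext i j
    simp only [Matrix.transpose_apply, Matrix.neg_apply, hQapp]
    ring
  have hQsign : ∀ i j, 0 < P i j ↔ 0 < Q i j := by
    intro i j
    rw [key, hQapp, sub_pos, Nat.cast_lt]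
  -- upper bound for the rank
  have hQle : Q.rank ≤ 2 := by
    rw [Matrix.rank_eq_finrank_span_cols]
    have hsub : Set.range Qᵀ ⊆
        ↑(Submodule.span ℝ (Set.range ![fun i => (u i : ℝ), fun _ => (1 : ℝ)])) := by
      rintro x ⟨j, rfl⟩
      have hx : Qᵀ j = (fun i => (u i : ℝ)) + (-(u j : ℝ)) • (fun _ => (1 : ℝ)) := by
        funext i
        simp [Matrix.transpose_apply, hQapp]
        ring
      rw [hx]
      refine Submodule.add_mem _ ?_ (Submodule.smul_mem _ _ ?_)
      · exact Submodule.subset_span ⟨0, rfl⟩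
      · exact Submodule.subset_span ⟨1, rfl⟩
    have hle := Submodule.span_le.mpr hsub
    calc Module.finrank ℝ (Submodule.span ℝ (Set.range Qᵀ))
        ≤ Module.finrank ℝ
          (Submodule.span ℝ (Set.range ![fun i => (u i : ℝ), fun _ => (1 : ℝ)])) :=
          Submodule.finrank_mono hle
      _ ≤ Fintype.card (Fin 2) := finrank_range_le_card _
      _ = 2 := by simp
  -- lower bound for the rank of any matrix with the same sign pattern
  have hlow : ∀ R : Matrix (Fin n) (Fin n) ℝ, Rᵀ = -R →
      (∀ i j, 0 < P i j ↔ 0 < R i j) → 2 ≤ R.rank := by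
    intro R hRanti hRsign
    have hRT : ∀ i j, R j i = -R i j := by
      intro i j
      have := congrFun (congrFun hRanti i) j
      simpa using this
    -- find a positive entry
    set a : Fin n := ⟨0, by omega⟩
    set b : Fin n := ⟨1, by omega⟩
    have hab : a ≠ b := by simp [a, b, Fin.ext_iff]
    obtain ⟨i0, j0, hpos⟩ : ∃ i0 j0, 0 < R i0 j0 := by
      rcases (hreg a b hab).lt_or_gt with hneg | hposab
      · have : 0 < P b a := by rw [hPT a b]; linarith
        exact ⟨b, a, (hRsign b a).mp this⟩
      · exact ⟨a, b, (hRsign a b).mp hposab⟩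
    have hRii : R i0 i0 = 0 := by have := hRT i0 i0; linarith
    have hRjj : R j0 j0 = 0 := by have := hRT j0 j0; linarith
    have hRji : R j0 i0 = -R i0 j0 := hRT i0 j0
    -- two linearly independent columns
    set c1 : Fin n → ℝ := fun k => R k i0 with hc1
    set c2 : Fin n → ℝ := fun k => R k j0 with hc2
    have li : LinearIndependent ℝ ![c1, c2] := by
      rw [LinearIndependent.pair_iff]
      intro s t hst
      have h1 : s * R i0 i0 + t * R i0 j0 = 0 := congrFun hst i0
      have h2 : s * R j0 i0 + t * R j0 j0 = 0 := congrFun hst j0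
      rw [hRii] at h1
      rw [hRjj, hRji] at h2
      constructor
      · have : s * R i0 j0 = 0 := by linarith
        exact (mul_eq_zero.mp this).resolve_right (ne_of_gt hpos)
      · have : t * R i0 j0 = 0 := by linarith
        exact (mul_eq_zero.mp this).resolve_right (ne_of_gt hpos)
    rw [Matrix.rank_eq_finrank_span_cols]
    have hsub : Set.range ![c1, c2] ⊆ Set.range Rᵀ := by
      rintro x ⟨i, rfl⟩
      fin_cases i
      · exact ⟨i0, rfl⟩
      · exact ⟨j0, rfl⟩
    have h2 : Module.finrank ℝ (Submodule.span ℝ (Set.range ![c1, c2])) = 2 := by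
      rw [finrank_span_eq_card li]
      simp
    calc (2 : ℕ) = Module.finrank ℝ (Submodule.span ℝ (Set.range ![c1, c2])) := h2.symm
      _ ≤ Module.finrank ℝ (Submodule.span ℝ (Set.range Rᵀ)) :=
        Submodule.finrank_mono (Submodule.span_mono hsub)
  constructor
  · exact ⟨Q, hQanti, hQsign, le_antisymm hQle (hlow Q hQanti hQsign)⟩
  · rintro r ⟨R, hRanti, hRsign, rfl⟩
    exact hlow R hRanti hRsign
end

section
/- Let n ≥ 3 and let P be an n×n real antisymmetric regular matrix. Let γ be a permutation of {1,…,n}. Then P is cyclic with maximal cycle γ(1) → γ(2) → … → γ(n) → γ(1) (i.e., P_{γ(i)γ(i+1)} > 0 for all 1 ≤ i ≤ n−1 and P_{γ(n)γ(1)} > 0) if and only if there exist K ∈ ℕ and vectors u¹,v¹,…,u^K,v^K ∈ ℝⁿ such that the sum ∑_{k=1}^K Disk(u^k, v^k) has the same sign pattern as P and every summand Disk(u^k, v^k) itself satisfies Disk(u^k,v^k)_{γ(i)γ(i+1)} > 0 for all 1 ≤ i ≤ n−1 and Disk(u^k,v^k)_{γ(n)γ(1)} > 0 (so each disk is cyclic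 and admits the same length-n cycle). -/
open Matrix

/-- `Disk u v = u vᵀ - v uᵀ`. -/
noncomputable def Disk {n : ℕ} (u v : Fin n → ℝ) : Matrix (Fin n) (Fin n) ℝ :=
  fun i j => u i * v j - v i * u j

/-- The cyclic successor of `i` in `Fin n` (so `n-1` maps to `0`). -/
def nxt {n : ℕ} (i : Fin n) : Fin n := ⟨(i.1 + 1) % n, Nat.mod_lt _ i.pos⟩

/-- A matrix `A` admits `γ` as a length-`n` cycle:
`A (γ i) (γ (i+1)) > 0` for `i = 0, …, n-2` and `A (γ (n-1)) (γ 0) > 0`. -/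
def AdmitsCycle {n : ℕ} (A : Matrix (Fin n) (Fin n) ℝ) (γ : Equiv.Perm (Fin n)) : Prop :=
  ∀ i : Fin n, 0 < A (γ i) (γ (nxt i))

/-- piecewise winding curve on [0,1) -/
noncomputable def W (a : ℝ) : ℝ × ℝ :=
  if a < 1/4 then (1 - 4*a, 4*a)
  else if a < 1/2 then (1 - 4*a, 2 - 4*a)
  else if a < 3/4 then (4*a - 3, 2 - 4*a)
  else (4*a - 3, 4*a - 4)

noncomputable def w (t : ℝ) : ℝ × ℝ := W (Int.fract t)

/-- cross product -/
def cr (z z' : ℝ × ℝ) : ℝ := z.1 * z'.2 - z.2 * z'.1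

lemma key1 (a b : ℝ) (ha : 0 ≤ a) (hab : a < b) (hd : b < a + 1/2) (hb : b < 1) :
    0 < cr (W a) (W b) := by
  unfold W cr
  split_ifs <;> simp only <;> nlinarith

lemma key2 (a b : ℝ) (hb0 : 0 ≤ b) (ha1 : a < 1) (hab : a < b + 1) (h : b + 1/2 < a) :
    0 < cr (W a) (W b) := by
  unfold W cr
  split_ifs <;> simp only <;> nlinarith

lemma cr_w_pos (s g : ℝ) (h0 : 0 < g) (h1 : g < 1/2) : 0 < cr (w s) (w (s + g)) := by
  have ha0 := Int.fract_nonneg s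
  have ha1 := Int.fract_lt_one s
  have hsg : Int.fract (s + g) = Int.fract (Int.fract s + g) := by
    conv_lhs => rw [← Int.floor_add_fract s]
    rw [add_assoc, Int.fract_intCast_add]
  unfold w
  rw [hsg]
  by_cases hlt : Int.fract s + g < 1
  · rw [Int.fract_eq_self.mpr ⟨by linarith, hlt⟩]
    exact key1 _ _ ha0 (by linarith) (by linarith) hlt
  · have : Int.fract (Int.fract s + g) = Int.fract s + g - 1 := by
      rw [show Int.fract s + g = (Int.fract s + g - 1) + 1 by ring, Int.fract_add_one,
        Int.fract_eq_self.mpr ⟨by linarith, by linarith⟩]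
      ring
    rw [this]
    exact key2 _ _ (by linarith) ha1 (by linarith) (by linarith)

lemma w_zero : w 0 = (1, 0) := by
  unfold w W
  norm_num

lemma w_one : w 1 = w 0 := by
  unfold w
  norm_num

lemma w_quarter : w (1/4) = (0, 1) := by
  unfold w W
  rw [Int.fract_eq_self.mpr (by norm_num)]
  norm_num

lemma w_three_quarter : w (3/4) = (0, -1) := by
  unfold w W
  rw [Int.fract_eq_self.mpr (by norm_num)]
  norm_num

lemma w_bnd (t : ℝ) : |(w t).1| ≤ 1 ∧ |(w t).2| ≤ 1 := by
  have ha0 := Int.fract_nonneg t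
  have ha1 := Int.fract_lt_one t
  unfold w W
  split_ifs <;> constructor <;> simp only <;> rw [abs_le] <;> constructor <;> linarith

lemma abs_cr_w_le (s t : ℝ) : |cr (w s) (w t)| ≤ 2 := by
  obtain ⟨h1, h2⟩ := w_bnd s
  obtain ⟨h3, h4⟩ := w_bnd t
  unfold cr
  have := abs_mul (w s).1 (w t).2
  have := abs_mul (w s).2 (w t).1
  calc |(w s).1 * (w t).2 - (w s).2 * (w t).1| ≤ |(w s).1 * (w t).2| + |(w s).2 * (w t).1| :=
        abs_sub _ _
    _ ≤ 2 := by
        rw [abs_mul, abs_mul]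
        nlinarith [abs_nonneg (w s).1, abs_nonneg (w s).2, abs_nonneg (w t).1, abs_nonneg (w t).2]

noncomputable def tf (A : ℝ) (d n m : ℕ) : ℝ :=
  if m ≤ d then m * A / d else A + ((m:ℝ) - d) * (1 - A) / ((n:ℝ) - d)

lemma tf_zero (A : ℝ) (d n : ℕ) : tf A d n 0 = 0 := by simp [tf]

lemma tf_d (A : ℝ) (d n : ℕ) (hd1 : 1 ≤ d) : tf A d n d = A := by
  have : (d:ℝ) ≠ 0 := by positivity
  simp [tf]
  field_simp

lemma tf_step (A : ℝ) (d n m : ℕ) (hd1 : 1 ≤ d) (hdn : d + 1 ≤ n) (hm : m + 1 < n) :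
    tf A d n (m+1) = tf A d n m + (if m < d then A / d else (1-A)/((n:ℝ)-d)) := by
  have hd0 : (d:ℝ) ≠ 0 := by positivity
  have hnd : (n:ℝ) - d ≠ 0 := by
    have : (d:ℝ) < n := by exact_mod_cast by omega
    linarith
  unfold tf
  by_cases h : m < d
  · rw [if_pos (by omega), if_pos (by omega), if_pos h]
    push_cast
    field_simp
  · rw [if_neg (by omega), if_neg h]
    by_cases h2 : m ≤ d
    · have hmd : m = d := by omega
      rw [if_pos h2, hmd]
      field_simp
      push_cast
      ring
    · rw [if_neg h2]
      push_cast
      field_simp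
      ring

lemma tf_last (A : ℝ) (d n m : ℕ) (hd1 : 1 ≤ d) (hdn : d + 1 ≤ n) (hm : m + 1 = n) :
    tf A d n m + (1-A)/((n:ℝ)-d) = 1 := by
  have hd0 : (d:ℝ) ≠ 0 := by positivity
  have hnd : (n:ℝ) - d ≠ 0 := by
    have : (d:ℝ) < n := by exact_mod_cast by omega
    linarith
  unfold tf
  by_cases h : m ≤ d
  · have hmd : m = d := by omega
    have hnd1 : (n:ℝ) - d = 1 := by
      have : n = d + 1 := by omega
      rw [this]; push_cast; ring
    rw [if_pos h, hmd, hnd1]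
    field_simp
    ring
  · rw [if_neg h]
    have hmn : (m:ℝ) = (n:ℝ) - 1 := by
      have : m = n - 1 := by omega
      rw [this]; push_cast [Nat.cast_sub (by omega : 1 ≤ n)]; ring
    rw [hmn]
    field_simp
    ring

noncomputable def dsku (n : ℕ) (i j : Fin n) (A ε : ℝ) : Fin n → ℝ :=
  fun a => (if a = i ∨ a = j then 1 else ε) *
    (w (tf A ((j - i : Fin n) : ℕ) n ((a - i : Fin n) : ℕ))).1

noncomputable def dskv (n : ℕ) (i j : Fin n) (A ε : ℝ) : Fin n → ℝ :=
  fun a => (if a = i ∨ a = j then 1 else ε) *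
    (w (tf A ((j - i : Fin n) : ℕ) n ((a - i : Fin n) : ℕ))).2

lemma dsk_apply (n : ℕ) (i j : Fin n) (A ε : ℝ) (a b : Fin n) :
    Disk (dsku n i j A ε) (dskv n i j A ε) a b
    = ((if a = i ∨ a = j then 1 else ε) * (if b = i ∨ b = j then 1 else ε)) *
      cr (w (tf A ((j - i : Fin n) : ℕ) n ((a - i : Fin n) : ℕ)))
         (w (tf A ((j - i : Fin n) : ℕ) n ((b - i : Fin n) : ℕ))) := by
  simp only [Disk, dsku, dskv, cr]
  ring

lemma disk_anti {n : ℕ} (u v : Fin n → ℝ) (a b : Fin n) : Disk u v b a = -Disk u v a b := by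
  simp only [Disk]; ring

lemma disk_diag {n : ℕ} (u v : Fin n → ℝ) (a : Fin n) : Disk u v a a = 0 := by
  simp only [Disk]; ring

lemma nxt_eq {n : ℕ} [NeZero n] (hn : 2 ≤ n) (k : Fin n) : nxt k = k + 1 := by
  apply Fin.ext
  have h1 : (1 : Fin n).val = 1 := by
    simp [Fin.val_one', Nat.mod_eq_of_lt (show 1 < n by omega)]
  simp [nxt, Fin.add_def, h1]

lemma sub_nxt {n : ℕ} (hn : 2 ≤ n) (k i : Fin n) :
    ((nxt k - i : Fin n) : ℕ) = (((k - i : Fin n) : ℕ) + 1) % n := by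
  haveI : NeZero n := ⟨by omega⟩
  have h1 : nxt k - i = (k - i) + 1 := by rw [nxt_eq hn, sub_add_eq_add_sub]
  have h2 : (1 : Fin n).val = 1 := by
    simp [Fin.val_one', Nat.mod_eq_of_lt (show 1 < n by omega)]
  rw [h1, Fin.add_def, h2]

lemma dsk_cyclic (n : ℕ) (i j : Fin n) (A ε : ℝ) (d : ℕ)
    (hD : ((j - i : Fin n) : ℕ) = d)
    (hn : 3 ≤ n) (hd1 : 1 ≤ d) (hdn : d + 1 ≤ n)
    (hA0 : 0 < A) (hA1 : A < 1)
    (hg1 : A / d < 1/2) (hg2 : (1-A)/((n:ℝ)-d) < 1/2) (hε : 0 < ε) :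
    ∀ k : Fin n, 0 < Disk (dsku n i j A ε) (dskv n i j A ε) k (nxt k) := by
  intro k
  rw [dsk_apply, hD]
  have hd0 : (0:ℝ) < d := by exact_mod_cast hd1
  have hnd : (0:ℝ) < (n:ℝ) - d := by
    have : (d:ℝ) + 1 ≤ n := by exact_mod_cast hdn
    linarith
  apply mul_pos
  · apply mul_pos <;> split_ifs <;> norm_num <;> exact hε
  · have hmn' : ((k - i : Fin n) : ℕ) < n := (k - i).isLt
    rw [sub_nxt (by omega) k i]
    generalize hmq : ((k - i : Fin n) : ℕ) = m at hmn' ⊢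
    have hmn : m < n := hmn'
    set g : ℝ := if m < d then A / d else (1-A)/((n:ℝ)-d) with hg
    have hg0 : 0 < g := by
      rw [hg]; split_ifs
      · exact div_pos hA0 hd0
      · exact div_pos (by linarith) hnd
    have hglt : g < 1/2 := by
      rw [hg]; split_ifs
      · exact hg1
      · exact hg2
    by_cases hc : m + 1 < n
    · rw [Nat.mod_eq_of_lt hc, tf_step A d n m hd1 hdn hc, ← hg]
      exact cr_w_pos _ _ hg0 hglt
    · have hmn1 : m + 1 = n := by omega
      have hm0 : (m + 1) % n = 0 := by rw [hmn1, Nat.mod_self]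
      rw [hm0, tf_zero]
      have hgv : g = (1-A)/((n:ℝ)-d) := by
        rw [hg, if_neg (by omega)]
      have h1 : tf A d n m + g = 1 := by rw [hgv]; exact tf_last A d n m hd1 hdn hmn1
      have := cr_w_pos (tf A d n m) g hg0 hglt
      rwa [h1, w_one] at this

lemma dsk_special (n : ℕ) (i j : Fin n) (A ε : ℝ) (hn : 3 ≤ n)
    (hd1 : 1 ≤ ((j - i : Fin n) : ℕ)) :
    Disk (dsku n i j A ε) (dskv n i j A ε) i j = cr (w 0) (w A) := by
  haveI : NeZero n := ⟨by omega⟩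
  rw [dsk_apply n i j A ε i j]
  rw [if_pos (Or.inl rfl : i = i ∨ i = j), if_pos (Or.inr rfl : j = i ∨ j = j)]
  have h1 : ((i - i : Fin n) : ℕ) = 0 := by rw [sub_self]; rfl
  rw [h1, tf_zero, tf_d _ _ _ hd1]
  ring

lemma dsk_bound (n : ℕ) (i j : Fin n) (A ε : ℝ) (hε : 0 ≤ ε) (a b : Fin n) :
    |Disk (dsku n i j A ε) (dskv n i j A ε) a b|
      ≤ 2 * (if a = i ∨ a = j then 1 else ε) * (if b = i ∨ b = j then 1 else ε) := by
  rw [dsk_apply, abs_mul, abs_mul]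
  have h1 : (0:ℝ) ≤ (if a = i ∨ a = j then 1 else ε) := by split_ifs <;> norm_num <;> exact hε
  have h2 : (0:ℝ) ≤ (if b = i ∨ b = j then 1 else ε) := by split_ifs <;> norm_num <;> exact hε
  rw [abs_of_nonneg h1, abs_of_nonneg h2]
  have hc2 := abs_cr_w_le (tf A ((j - i : Fin n) : ℕ) n ((a - i : Fin n) : ℕ))
    (tf A ((j - i : Fin n) : ℕ) n ((b - i : Fin n) : ℕ))
  set x := (if a = i ∨ a = j then (1:ℝ) else ε)
  set y := (if b = i ∨ b = j then (1:ℝ) else ε)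
  set c := |cr (w (tf A ((j - i : Fin n) : ℕ) n ((a - i : Fin n) : ℕ)))
    (w (tf A ((j - i : Fin n) : ℕ) n ((b - i : Fin n) : ℕ)))| with hcdef
  have hc0 : 0 ≤ c := abs_nonneg _
  nlinarith [mul_nonneg h1 h2]


open Matrix

section Main

variable (n : ℕ)

/-- decoding of a pair index -/
def dec1 [NeZero n] (k : Fin (n*n)) : Fin n :=
  ⟨k.val / n, by
    have h0 : 0 < n := Nat.pos_of_ne_zero (NeZero.ne n)
    exact (Nat.div_lt_iff_lt_mul h0).mpr (by simpa [mul_comm] using k.isLt)⟩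

def dec2 [NeZero n] (k : Fin (n*n)) : Fin n :=
  ⟨k.val % n, Nat.mod_lt _ (Nat.pos_of_ne_zero (NeZero.ne n))⟩

/-- encoding of a pair -/
def enc [NeZero n] (a b : Fin n) : Fin (n*n) :=
  ⟨a.val * n + b.val, by
    have ha := a.isLt; have hb := b.isLt
    calc a.val * n + b.val < a.val * n + n := by omega
      _ ≤ n * n := by nlinarith⟩

lemma dec1_enc [NeZero n] (a b : Fin n) : dec1 n (enc n a b) = a := by
  have hb := b.isLt
  apply Fin.ext
  simp only [dec1, enc]
  have h0 : 0 < n := Nat.pos_of_ne_zero (NeZero.ne n)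
  rw [add_comm, Nat.add_mul_div_right _ _ h0, Nat.div_eq_of_lt hb, zero_add]

lemma dec2_enc [NeZero n] (a b : Fin n) : dec2 n (enc n a b) = b := by
  have hb := b.isLt
  apply Fin.ext
  simp only [dec2, enc]
  rw [add_comm, Nat.add_mul_mod_self_right, Nat.mod_eq_of_lt hb]

lemma enc_dec [NeZero n] (k : Fin (n*n)) : enc n (dec1 n k) (dec2 n k) = k := by
  apply Fin.ext
  simp only [enc, dec1, dec2]
  rw [mul_comm]
  exact Nat.div_add_mod _ _

/-- validity of a pair: cyclic distance in [2, n-2] -/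
def Val (a b : Fin n) : Prop :=
  2 ≤ ((b - a : Fin n) : ℕ) ∧ ((b - a : Fin n) : ℕ) + 2 ≤ n

open Classical in
noncomputable def PI [NeZero n] (k : Fin (n*n)) : Fin n :=
  if Val n (dec1 n k) (dec2 n k) then dec1 n k else 0

open Classical in
noncomputable def PJ [NeZero n] (k : Fin (n*n)) : Fin n :=
  if Val n (dec1 n k) (dec2 n k) then dec2 n k else 1

open Classical in
noncomputable def PA [NeZero n] (P : Matrix (Fin n) (Fin n) ℝ) (γ : Equiv.Perm (Fin n))
    (k : Fin (n*n)) : ℝ :=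
  if Val n (dec1 n k) (dec2 n k) then
    (if 0 < P (γ (dec1 n k)) (γ (dec2 n k)) then 1/4 else 3/4) else 1/n

noncomputable def eps : ℝ := 1/(4*n*n)

lemma eps_pos (hn : 3 ≤ n) : 0 < eps n := by
  unfold eps
  have : (0:ℝ) < n := by exact_mod_cast by omega
  positivity

lemma eps_le_one (hn : 3 ≤ n) : eps n ≤ 1 := by
  unfold eps
  have h : (3:ℝ) ≤ n := by exact_mod_cast hn
  rw [div_le_one (by positivity)]
  nlinarith

lemma val_one_fin (hn : 3 ≤ n) [NeZero n] : ((1 : Fin n) : ℕ) = 1 := by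
  simp [Fin.val_one', Nat.mod_eq_of_lt (show 1 < n by omega)]

lemma dval_one (hn : 3 ≤ n) [NeZero n] : (((1:Fin n) - (0:Fin n) : Fin n) : ℕ) = 1 := by
  rw [sub_zero]; exact val_one_fin n hn

/-- the parameters of every disk are good -/
lemma prm_good [NeZero n] (hn : 3 ≤ n) (P : Matrix (Fin n) (Fin n) ℝ)
    (γ : Equiv.Perm (Fin n)) (k : Fin (n*n)) :
    1 ≤ ((PJ n k - PI n k : Fin n) : ℕ) ∧ ((PJ n k - PI n k : Fin n) : ℕ) + 1 ≤ n ∧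
    0 < PA n P γ k ∧ PA n P γ k < 1 ∧
    PA n P γ k / ((PJ n k - PI n k : Fin n) : ℕ) < 1/2 ∧
    (1 - PA n P γ k)/((n:ℝ) - ((PJ n k - PI n k : Fin n) : ℕ)) < 1/2 := by
  classical
  have hn3 : (3:ℝ) ≤ n := by exact_mod_cast hn
  unfold PI PJ PA
  by_cases h : Val n (dec1 n k) (dec2 n k)
  · rw [if_pos h, if_pos h, if_pos h]
    obtain ⟨h1, h2⟩ := h
    set D : ℕ := ((dec2 n k - dec1 n k : Fin n) : ℕ)
    have hD2 : (2:ℝ) ≤ D := by exact_mod_cast h1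
    have hDn : (D:ℝ) + 2 ≤ n := by exact_mod_cast h2
    refine ⟨by omega, by omega, ?_, ?_, ?_, ?_⟩
    · split_ifs <;> norm_num
    · split_ifs <;> norm_num
    · rw [div_lt_iff₀ (by linarith)]
      split_ifs <;> nlinarith
    · rw [div_lt_iff₀ (by linarith)]
      split_ifs <;> nlinarith
  · rw [if_neg h, if_neg h, if_neg h]
    rw [dval_one n hn]
    have h1 : (1:ℝ)/n < 1/2 := by
      rw [div_lt_div_iff₀ (by linarith) (by norm_num)]
      linarith
    refine ⟨le_refl 1, by omega, by positivity, ?_, ?_, ?_⟩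
    · rw [div_lt_one (by linarith)]; linarith
    · norm_num
      simpa using h1
    · have : ((1:ℕ):ℝ) = (1:ℝ) := by norm_num
      rw [this]
      have heq : (1 - 1/(n:ℝ))/((n:ℝ) - 1) = 1/n := by
        rw [div_eq_div_iff (by linarith) (by linarith)]
        field_simp
      rw [heq]
      exact h1

end Main

section DVal
variable {n : ℕ}

lemma dval_zero_iff [NeZero n] {a b : Fin n} : ((b - a : Fin n) : ℕ) = 0 ↔ b = a := by
  rw [← Fin.val_zero n, Fin.val_eq_val, sub_eq_zero]

lemma dval_one_iff (hn : 3 ≤ n) [NeZero n] {a b : Fin n} :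
    ((b - a : Fin n) : ℕ) = 1 ↔ b = nxt a := by
  rw [nxt_eq (by omega : 2 ≤ n)]
  constructor
  · intro h
    have h1 : b - a = 1 := by
      apply Fin.ext
      rw [h, val_one_fin n hn]
    have := sub_eq_iff_eq_add.mp h1
    rw [this, add_comm]
  · intro h
    subst h
    have : a + 1 - a = 1 := by abel
    rw [this, val_one_fin n hn]

lemma dval_swap (n : ℕ) [NeZero n] (a b : Fin n) (h : a ≠ b) :
    ((a - b : Fin n) : ℕ) = n - ((b - a : Fin n) : ℕ) := by
  have h1 : a - b = -(b - a) := by abel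
  have h2 : ((b - a : Fin n) : ℕ) ≠ 0 := by
    intro hh
    exact h (dval_zero_iff.mp hh).symm
  have h3 := (b - a).isLt
  rw [h1]
  rcases Nat.eq_zero_or_pos n with h0 | h0
  · omega
  · rw [Fin.coe_neg]
    rw [Nat.mod_eq_of_lt (by omega)]

end DVal

open Finset in
/-- **Theorem 3 (cyclic games can be decomposed using cyclic disks only):**
a regular game `P` is cyclic with maximal cycle `γ(1) → ⋯ → γ(n) → γ(1)` iff
`P` has the same sign pattern as a sum of disks, each of which admits the same
length-`n` cycle `γ`. -/
theorem cyclic_iff_sum_of_cyclic_disks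
    (n : ℕ) (hn : 3 ≤ n)
    (P : Matrix (Fin n) (Fin n) ℝ)
    (hanti : Pᵀ = -P)
    (hreg : ∀ i j, i ≠ j → P i j ≠ 0)
    (γ : Equiv.Perm (Fin n)) :
    AdmitsCycle P γ ↔
      ∃ (K : ℕ) (u v : Fin K → Fin n → ℝ),
        (∀ i j, 0 < P i j ↔ 0 < (∑ k, Disk (u k) (v k)) i j) ∧
        (∀ k, AdmitsCycle (Disk (u k) (v k)) γ) := by
  haveI : NeZero n := ⟨by omega⟩
  have hPanti : ∀ x y, P x y = - P y x := by
    intro x y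
    have := congrFun (congrFun hanti y) x
    simpa using this
  have hnxt_ne : ∀ m : Fin n, m ≠ nxt m := by
    intro m h
    rw [nxt_eq (by omega : 2 ≤ n)] at h
    have h2 : m + 0 = m + 1 := by simpa using h
    have h3 : (0 : Fin n) = 1 := add_left_cancel h2
    have h4 : ((0 : Fin n) : ℕ) = ((1 : Fin n) : ℕ) := congrArg Fin.val h3
    rw [val_one_fin n hn] at h4
    simp at h4
  constructor
  · -- forward direction
    intro hcyc
    have hε0 : 0 ≤ eps n := le_of_lt (eps_pos n hn)
    have hε1 : eps n ≤ 1 := eps_le_one n hn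
    set F : Fin (n*n) → Matrix (Fin n) (Fin n) ℝ :=
      fun k => Disk (dsku n (PI n k) (PJ n k) (PA n P γ k) (eps n))
                    (dskv n (PI n k) (PJ n k) (PA n P γ k) (eps n)) with hF
    have hdisk : ∀ (k : Fin (n*n)) (m : Fin n), 0 < F k m (nxt m) := by
      intro k m
      obtain ⟨g1,g2,g3,g4,g5,g6⟩ := prm_good n hn P γ k
      exact dsk_cyclic n _ _ _ _ _ rfl hn g1 g2 g3 g4 g5 g6 (eps_pos n hn) m
    refine ⟨n*n, fun k x => dsku n (PI n k) (PJ n k) (PA n P γ k) (eps n) (γ.symm x),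
            fun k x => dskv n (PI n k) (PJ n k) (PA n P γ k) (eps n) (γ.symm x), ?_, ?_⟩
    swap
    · intro k m
      show 0 < F k (γ.symm (γ m)) (γ.symm (γ (nxt m)))
      rw [γ.symm_apply_apply, γ.symm_apply_apply]
      exact hdisk k m
    intro x y
    obtain ⟨a, rfl⟩ := γ.surjective x
    obtain ⟨b, rfl⟩ := γ.surjective y
    have hS : ∀ (c e : Fin n),
        (∑ k, Disk (fun x => dsku n (PI n k) (PJ n k) (PA n P γ k) (eps n) (γ.symm x))
          (fun x => dskv n (PI n k) (PJ n k) (PA n P γ k) (eps n) (γ.symm x))) (γ c) (γ e)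
        = ∑ k, F k c e := by
      intro c e
      simp only [Matrix.sum_apply]
      apply Finset.sum_congr rfl
      intro k _
      show F k (γ.symm (γ c)) (γ.symm (γ e)) = F k c e
      rw [γ.symm_apply_apply, γ.symm_apply_apply]
    rw [hS a b]
    have hsum_pos : ∀ c : Fin n, 0 < ∑ k, F k c (nxt c) := by
      intro c
      exact Finset.sum_pos (fun k _ => hdisk k c) ⟨⟨0, by nlinarith⟩, Finset.mem_univ _⟩
    rcases eq_or_ne b a with rfl | hne0
    · -- diagonal
      have h1 : P (γ b) (γ b) = 0 := by have := hPanti (γ b) (γ b); linarith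
      have h2 : ∑ k, F k b b = 0 := by
        apply Finset.sum_eq_zero
        intro k _
        exact disk_diag _ _ b
      rw [h1, h2]
    · rcases eq_or_ne b (nxt a) with rfl | hne1
      · -- cycle edge: both positive
        have h1 := hcyc a
        have h2 := hsum_pos a
        constructor <;> intro <;> assumption
      · rcases eq_or_ne a (nxt b) with rfl | hne2
        · -- reverse cycle edge: both negative
          have h1 : P (γ (nxt b)) (γ b) = - P (γ b) (γ (nxt b)) := hPanti _ _
          have h2 : ∑ k, F k (nxt b) b = - ∑ k, F k b (nxt b) := by
            rw [← Finset.sum_neg_distrib]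
            apply Finset.sum_congr rfl
            intro k _
            exact disk_anti _ _ b (nxt b)
          have h3 := hcyc b
          have h4 := hsum_pos b
          constructor <;> intro h <;> [linarith; linarith]
        · -- main case : non-adjacent pair
          have hDne0 : ((b - a : Fin n) : ℕ) ≠ 0 :=
            fun h => hne0 (dval_zero_iff.mp h)
          have hDne1 : ((b - a : Fin n) : ℕ) ≠ 1 :=
            fun h => hne1 ((dval_one_iff hn).mp h)
          have hswap := dval_swap n a b (fun hh => hne0 hh.symm)
          have hDnen1 : ((b - a : Fin n) : ℕ) ≠ n - 1 := by
            intro h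
            apply hne2
            apply (dval_one_iff hn).mp
            rw [hswap, h]
            omega
          have hDlt : ((b - a : Fin n) : ℕ) < n := (b - a).isLt
          have hVab : Val n a b := ⟨by omega, by omega⟩
          have hVba : Val n b a := by
            constructor <;> rw [hswap] <;> omega
          have hPne : P (γ a) (γ b) ≠ 0 :=
            hreg _ _ (fun h => hne0 (γ.injective h).symm)
          have hcr1 : cr (w 0) (w (1/4)) = 1 := by rw [w_zero, w_quarter]; simp [cr]
          have hcr2 : cr (w 0) (w (3/4)) = -1 := by rw [w_zero, w_three_quarter]; simp [cr]
          classical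
          set σ : ℝ := if 0 < P (γ a) (γ b) then 1 else -1 with hσ
          have hd1ab : 1 ≤ ((b - a : Fin n) : ℕ) := by omega
          have hd1ba : 1 ≤ ((a - b : Fin n) : ℕ) := by rw [hswap]; omega
          have e1 : PI n (enc n a b) = a := by
            unfold PI; rw [dec1_enc, dec2_enc, if_pos hVab]
          have e2 : PJ n (enc n a b) = b := by
            unfold PJ; rw [dec1_enc, dec2_enc, if_pos hVab]
          have e3 : PA n P γ (enc n a b) = if 0 < P (γ a) (γ b) then 1/4 else 3/4 := by
            unfold PA; rw [dec1_enc, dec2_enc, if_pos hVab]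
          have f1 : PI n (enc n b a) = b := by
            unfold PI; rw [dec1_enc, dec2_enc, if_pos hVba]
          have f2 : PJ n (enc n b a) = a := by
            unfold PJ; rw [dec1_enc, dec2_enc, if_pos hVba]
          have f3 : PA n P γ (enc n b a) = if 0 < P (γ b) (γ a) then 1/4 else 3/4 := by
            unfold PA; rw [dec1_enc, dec2_enc, if_pos hVba]
          have hk0 : F (enc n a b) a b = σ := by
            show Disk _ _ a b = σ
            rw [e1, e2, e3, dsk_special n a b _ (eps n) hn hd1ab, hσ]
            split_ifs with hp
            · exact hcr1
            · exact hcr2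
          have hk1 : F (enc n b a) a b = σ := by
            have h1 : F (enc n b a) a b = - F (enc n b a) b a := disk_anti _ _ b a
            have h2 : F (enc n b a) b a = cr (w 0) (w (PA n P γ (enc n b a))) := by
              show Disk _ _ b a = _
              rw [f1, f2, dsk_special n b a _ (eps n) hn hd1ba]
            rw [h1, h2, f3, hσ]
            by_cases hp : 0 < P (γ a) (γ b)
            · have hnp : ¬ 0 < P (γ b) (γ a) := by
                have h := hPanti (γ b) (γ a); intro hq; linarith
              rw [if_neg hnp, hcr2, if_pos hp]
              all_goals norm_num
            · have hplt : P (γ a) (γ b) < 0 := lt_of_le_of_ne (not_lt.mp hp) hPne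
              have hpp : 0 < P (γ b) (γ a) := by
                have h := hPanti (γ b) (γ a); linarith
              rw [if_pos hpp, hcr1, if_neg hp]
              all_goals norm_num
          set E : Finset (Fin (n*n)) := (Finset.univ.erase (enc n a b)).erase (enc n b a) with hE
          have hk01 : enc n b a ≠ enc n a b := by
            intro h
            have := congrArg (dec1 n) h
            rw [dec1_enc, dec1_enc] at this
            exact hne0 this
          have hmem1 : enc n b a ∈ Finset.univ.erase (enc n a b) :=
            Finset.mem_erase.mpr ⟨hk01, Finset.mem_univ _⟩
          have hsplit : ∑ k, F k a b
              = F (enc n a b) a b + (F (enc n b a) a b + ∑ k ∈ E, F k a b) := by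
            rw [Finset.add_sum_erase _ (fun k => F k a b) hmem1,
                Finset.add_sum_erase _ (fun k => F k a b) (Finset.mem_univ (enc n a b))]
          have hrest : ∀ k ∈ E, |F k a b| ≤ 2 * eps n := by
            intro k hk
            have hkne1 : k ≠ enc n b a := (Finset.mem_erase.mp hk).1
            have hkne0 : k ≠ enc n a b := (Finset.mem_erase.mp (Finset.mem_erase.mp hk).2).1
            have hbnd := dsk_bound n (PI n k) (PJ n k) (PA n P γ k) (eps n) hε0 a b
            have hsmall : ¬ ((a = PI n k ∨ a = PJ n k) ∧ (b = PI n k ∨ b = PJ n k)) := by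
              rintro ⟨c1, c2⟩
              by_cases hv : Val n (dec1 n k) (dec2 n k)
              · have g1 : PI n k = dec1 n k := by unfold PI; rw [if_pos hv]
                have g2 : PJ n k = dec2 n k := by unfold PJ; rw [if_pos hv]
                rcases c1 with c1 | c1 <;> rcases c2 with c2 | c2
                · exact hne0 (c2.trans c1.symm)
                · exact hkne0 (by rw [← enc_dec n k, ← g1, ← g2, ← c1, ← c2])
                · exact hkne1 (by rw [← enc_dec n k, ← g1, ← g2, ← c2, ← c1])
                · exact hne0 (c2.trans c1.symm)
              · have g1 : PI n k = 0 := by unfold PI; rw [if_neg hv]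
                have g2 : PJ n k = 1 := by unfold PJ; rw [if_neg hv]
                rw [g1, g2] at c1 c2
                rcases c1 with c1 | c1 <;> rcases c2 with c2 | c2
                · exact hne0 (c2.trans c1.symm)
                · -- a = 0, b = 1
                  have hD1 : ((b - a : Fin n) : ℕ) = 1 := by
                    rw [c1, c2]; exact dval_one n hn
                  omega
                · -- a = 1, b = 0
                  have hD1 : ((a - b : Fin n) : ℕ) = 1 := by
                    rw [c1, c2]; exact dval_one n hn
                  rw [hswap] at hD1
                  omega
                · exact hne0 (c2.trans c1.symm)
            by_cases c1 : (a = PI n k ∨ a = PJ n k)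
            · have c2 : ¬ (b = PI n k ∨ b = PJ n k) := fun c2 => hsmall ⟨c1, c2⟩
              rw [if_pos c1, if_neg c2] at hbnd
              calc |F k a b| ≤ 2 * 1 * eps n := hbnd
                _ = 2 * eps n := by ring
            · rw [if_neg c1] at hbnd
              have h2b : (if b = PI n k ∨ b = PJ n k then (1:ℝ) else eps n) ≤ 1 := by
                split_ifs
                · exact le_refl 1
                · exact hε1
              have h2c : (0:ℝ) ≤ 2 * eps n := by positivity
              calc |F k a b| ≤ 2 * eps n * (if b = PI n k ∨ b = PJ n k then (1:ℝ) else eps n) :=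
                    hbnd
                _ ≤ 2 * eps n * 1 := mul_le_mul_of_nonneg_left h2b h2c
                _ = 2 * eps n := by ring
          have hnR : (0:ℝ) < n := by exact_mod_cast by omega
          have hEbound : |∑ k ∈ E, F k a b| ≤ 1/2 := by
            have hcard : (E.card : ℝ) ≤ (n*n : ℕ) := by
              have h1 : E.card ≤ Fintype.card (Fin (n*n)) := Finset.card_le_univ E
              rw [Fintype.card_fin] at h1
              exact_mod_cast h1
            calc |∑ k ∈ E, F k a b| ≤ ∑ k ∈ E, |F k a b| := Finset.abs_sum_le_sum_abs _ _
              _ ≤ E.card • (2 * eps n) := Finset.sum_le_card_nsmul _ _ _ hrest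
              _ = (E.card : ℝ) * (2 * eps n) := nsmul_eq_mul _ _
              _ ≤ ((n*n : ℕ) : ℝ) * (2 * eps n) := by
                  apply mul_le_mul_of_nonneg_right hcard (by positivity)
              _ = 1/2 := by
                  unfold eps
                  push_cast
                  field_simp
                  ring
          rw [hsplit, hk0, hk1]
          have habs := abs_le.mp hEbound
          by_cases hp : 0 < P (γ a) (γ b)
          · have hσ1 : σ = 1 := by rw [hσ, if_pos hp]
            rw [hσ1]
            constructor
            · intro _; linarith
            · intro _; exact hp
          · have hσ1 : σ = -1 := by rw [hσ, if_neg hp]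
            rw [hσ1]
            constructor
            · intro h; exact absurd h hp
            · intro h; exfalso; linarith
  · -- reverse direction
    rintro ⟨K, u, v, hsign, hcycD⟩ m
    rcases Nat.eq_zero_or_pos K with hK | hK
    · exfalso
      subst hK
      have h1 : ¬ (0 < P (γ m) (γ (nxt m))) := by
        rw [hsign]
        simp [Matrix.sum_apply]
      have h2 : ¬ (0 < P (γ (nxt m)) (γ m)) := by
        rw [hsign]
        simp [Matrix.sum_apply]
      have hne : γ m ≠ γ (nxt m) := fun h => hnxt_ne m (γ.injective h)
      have h3 := hreg _ _ hne
      have h4 := hPanti (γ m) (γ (nxt m))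
      rcases lt_trichotomy (P (γ m) (γ (nxt m))) 0 with h|h|h
      · apply h2; linarith
      · exact h3 h
      · exact h1 h
    · rw [hsign]
      simp only [Matrix.sum_apply]
      exact Finset.sum_pos (fun k _ => hcycD k m) ⟨⟨0, hK⟩, Finset.mem_univ _⟩
end

section
/- Let P be an n×n real antisymmetric regular matrix that is cyclic via a permutation γ of {1,…,n} (P_{γ(i)γ(i+1)} > 0 for 1 ≤ i ≤ n−1 and P_{γ(n)γ(1)} > 0). If n ≤ 4, there exists a single pair of vectors u,v ∈ ℝⁿ such that Disk(u,v) has the same sign pattern as P and admits γ as a length-n cycle. If n ≥ 5, there exist K ≤ 2(n−3)+1 and vectors u¹,v¹,…,u^K,v^K ∈ ℝⁿ such that ∑_{k=1}^K Disk(u^k,v^k) has the same sign pattern as P and each Disk(u^k,v^k) admits γ as a length-n cycle. -/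
open Matrix

namespace CyclicDiskAux

variable {n : ℕ}

lemma disk_apply (u v : Fin n → ℝ) (i j : Fin n) :
    Disk u v i j = u i * v j - v i * u j := rfl

lemma disk_antisymm (u v : Fin n → ℝ) (i j : Fin n) : Disk u v i j = -Disk u v j i := by
  simp only [disk_apply]; ring

lemma disk_diag (u v : Fin n → ℝ) (i : Fin n) : Disk u v i i = 0 := by
  simp only [disk_apply]; ring

noncomputable def sgn (Q : Matrix (Fin n) (Fin n) ℝ) (m j : Fin n) : ℝ :=
  if 0 < Q m j then -1 else 1

lemma sgn_mul_self (Q : Matrix (Fin n) (Fin n) ℝ) (m j : Fin n) :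
    sgn Q m j * sgn Q m j = 1 := by
  unfold sgn; split_ifs <;> norm_num

lemma abs_sgn (Q : Matrix (Fin n) (Fin n) ℝ) (m j : Fin n) : |sgn Q m j| = 1 := by
  unfold sgn; split_ifs <;> simp

def idx (m : Fin n) (t : ℕ) : Fin n := ⟨(m.1 + 1 + t) % n, Nat.mod_lt _ m.pos⟩

def tpos (m j : Fin n) : ℕ := (j.1 + n - (m.1 + 1)) % n

lemma idx_tpos (m j : Fin n) : idx m (tpos m j) = j := by
  apply Fin.ext
  show (m.1 + 1 + (j.1 + n - (m.1 + 1)) % n) % n = j.1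
  rw [Nat.add_mod_mod]
  have h2 : m.1 + 1 + (j.1 + n - (m.1 + 1)) = j.1 + n := by
    have := m.isLt; omega
  rw [h2, Nat.add_mod_right, Nat.mod_eq_of_lt j.isLt]

lemma tpos_lt (m j : Fin n) : tpos m j < n := Nat.mod_lt _ m.pos

lemma tpos_self (m : Fin n) : tpos m m = n - 1 := by
  unfold tpos
  have h : m.1 + n - (m.1 + 1) = n - 1 := by omega
  rw [h, Nat.mod_eq_of_lt (by have := m.pos; omega)]

lemma idx_succ (m : Fin n) (t : ℕ) : idx m (t + 1) = nxt (idx m t) := by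
  apply Fin.ext
  show (m.1 + 1 + (t + 1)) % n = ((m.1 + 1 + t) % n + 1) % n
  rw [Nat.mod_add_mod]
  congr 1

lemma tpos_idx (m : Fin n) {t : ℕ} (ht : t < n) : tpos m (idx m t) = t := by
  show ((m.1 + 1 + t) % n + n - (m.1 + 1)) % n = t
  have hm := m.isLt
  rcases Nat.lt_or_ge (m.1 + 1 + t) n with h | h
  · rw [Nat.mod_eq_of_lt h]
    have h3 : m.1 + 1 + t + n - (m.1 + 1) = t + n := by omega
    rw [h3, Nat.add_mod_right, Nat.mod_eq_of_lt ht]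
  · have hin : (m.1 + 1 + t) % n = m.1 + 1 + t - n := by
      rw [Nat.mod_eq_sub_mod h]
      exact Nat.mod_eq_of_lt (by omega)
    have h3 : m.1 + 1 + t - n + n - (m.1 + 1) = t := by omega
    rw [hin, h3, Nat.mod_eq_of_lt ht]

lemma tpos_lt_of_ne {m j : Fin n} (hj : j ≠ m) : tpos m j < n - 1 := by
  have h1 := tpos_lt m j
  rcases Nat.lt_or_ge (tpos m j) (n - 1) with h | h
  · exact h
  · exfalso
    apply hj
    have he : tpos m j = n - 1 := by omega
    have h2 := idx_tpos m j
    rw [he, ← tpos_self m, idx_tpos] at h2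
    exact h2.symm

lemma nxt_ne_self (hn : 2 ≤ n) (a : Fin n) : nxt a ≠ a := by
  intro h
  have hv : (a.1 + 1) % n = a.1 := congrArg Fin.val h
  have ha := a.isLt
  rcases Nat.lt_or_ge (a.1 + 1) n with h' | h'
  · rw [Nat.mod_eq_of_lt h'] at hv; omega
  · have h2 : a.1 + 1 = n := by omega
    rw [h2, Nat.mod_self] at hv; omega

noncomputable def cseq (Q : Matrix (Fin n) (Fin n) ℝ) (m : Fin n) : ℕ → ℝ
  | 0 => 0
  | t + 1 => cseq Q m t + sgn Q m (idx m (t + 1)) * sgn Q m (idx m t)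

lemma abs_cseq_le (Q : Matrix (Fin n) (Fin n) ℝ) (m : Fin n) (t : ℕ) :
    |cseq Q m t| ≤ (t : ℝ) := by
  induction t with
  | zero => simp [cseq]
  | succ t ih =>
    have h1 : |sgn Q m (idx m (t + 1)) * sgn Q m (idx m t)| = 1 := by
      rw [abs_mul, abs_sgn, abs_sgn]; norm_num
    calc |cseq Q m (t + 1)| ≤ |cseq Q m t| + |sgn Q m (idx m (t + 1)) * sgn Q m (idx m t)| :=
          abs_add_le _ _
      _ ≤ (t : ℝ) + 1 := by rw [h1]; linarith
      _ = ((t + 1 : ℕ) : ℝ) := by push_cast; ring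

noncomputable def Cf (Q : Matrix (Fin n) (Fin n) ℝ) (m j : Fin n) : ℝ := cseq Q m (tpos m j)

noncomputable def Uf (Q : Matrix (Fin n) (Fin n) ℝ) (m : Fin n) : Fin n → ℝ :=
  fun j => if j = m then 0 else sgn Q m j

noncomputable def Vf (Q : Matrix (Fin n) (Fin n) ℝ) (m : Fin n) (τ : ℝ) : Fin n → ℝ :=
  fun j => if j = m then 1 else τ * (sgn Q m j * Cf Q m j)

lemma abs_Cf_le (Q : Matrix (Fin n) (Fin n) ℝ) (m j : Fin n) : |Cf Q m j| ≤ (n : ℝ) := by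
  refine le_trans (abs_cseq_le Q m (tpos m j)) ?_
  exact_mod_cast (tpos_lt m j).le

lemma fan_row (Q : Matrix (Fin n) (Fin n) ℝ) {m j : Fin n} (τ : ℝ) (hj : j ≠ m) :
    Disk (Uf Q m) (Vf Q m τ) m j = -sgn Q m j := by
  simp [disk_apply, Uf, Vf, hj]

lemma fan_col (Q : Matrix (Fin n) (Fin n) ℝ) {m j : Fin n} (τ : ℝ) (hj : j ≠ m) :
    Disk (Uf Q m) (Vf Q m τ) j m = sgn Q m j := by
  simp [disk_apply, Uf, Vf, hj]

lemma fan_off (Q : Matrix (Fin n) (Fin n) ℝ) {m j l : Fin n} (τ : ℝ) (hj : j ≠ m) (hl : l ≠ m) :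
    Disk (Uf Q m) (Vf Q m τ) j l
      = τ * ((sgn Q m j * sgn Q m l) * (Cf Q m l - Cf Q m j)) := by
  simp only [disk_apply, Uf, Vf, if_neg hj, if_neg hl]
  ring

lemma fan_step (Q : Matrix (Fin n) (Fin n) ℝ) {m j : Fin n} (τ : ℝ)
    (hj : j ≠ m) (hnj : nxt j ≠ m) :
    Disk (Uf Q m) (Vf Q m τ) j (nxt j) = τ := by
  have hm := m.isLt
  have ht := tpos_lt_of_ne hj
  have h1 : idx m (tpos m j) = j := idx_tpos m j
  have h2 : nxt j = idx m (tpos m j + 1) := by rw [idx_succ, h1]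
  have h3 : tpos m (nxt j) = tpos m j + 1 := by
    rw [h2, tpos_idx m (by omega)]
  rw [fan_off Q τ hj hnj]
  have h4 : Cf Q m (nxt j) - Cf Q m j
      = sgn Q m (nxt j) * sgn Q m j := by
    unfold Cf
    rw [h3]
    have h5 : cseq Q m (tpos m j + 1)
        = cseq Q m (tpos m j) + sgn Q m (idx m (tpos m j + 1)) * sgn Q m (idx m (tpos m j)) := rfl
    rw [h5, h1, ← h2]
    ring
  rw [h4]
  have e1 := sgn_mul_self Q m j
  have e2 := sgn_mul_self Q m (nxt j)
  have h6 : sgn Q m j * sgn Q m (nxt j) * (sgn Q m (nxt j) * sgn Q m j)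
      = sgn Q m j * sgn Q m j * (sgn Q m (nxt j) * sgn Q m (nxt j)) := by ring
  rw [h6, e1, e2]
  ring

lemma fan_abs (Q : Matrix (Fin n) (Fin n) ℝ) {m a b : Fin n} {τ : ℝ} (hτ : 0 ≤ τ)
    (ha : a ≠ m) (hb : b ≠ m) :
    |Disk (Uf Q m) (Vf Q m τ) a b| ≤ τ * (2 * n) := by
  rw [fan_off Q τ ha hb]
  have h1 : |sgn Q m a * sgn Q m b| = 1 := by rw [abs_mul, abs_sgn, abs_sgn]; norm_num
  have h2 : |Cf Q m b - Cf Q m a| ≤ 2 * (n : ℝ) := by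
    have hca := abs_Cf_le Q m a
    have hcb := abs_Cf_le Q m b
    calc |Cf Q m b - Cf Q m a| ≤ |Cf Q m b| + |Cf Q m a| := abs_sub _ _
      _ ≤ 2 * (n : ℝ) := by linarith
  calc |τ * ((sgn Q m a * sgn Q m b) * (Cf Q m b - Cf Q m a))|
      = τ * (|sgn Q m a * sgn Q m b| * |Cf Q m b - Cf Q m a|) := by
        rw [abs_mul, abs_mul, abs_of_nonneg hτ]
    _ = τ * |Cf Q m b - Cf Q m a| := by rw [h1, one_mul]
    _ ≤ τ * (2 * n) := mul_le_mul_of_nonneg_left h2 hτ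

lemma fan_cyc (Q : Matrix (Fin n) (Fin n) ℝ) (hn : 2 ≤ n)
    (hanti : ∀ a b, Q b a = -Q a b) (hcyc : ∀ a, 0 < Q a (nxt a))
    (m : Fin n) {τ : ℝ} (hτ : 0 < τ) (a : Fin n) :
    0 < Disk (Uf Q m) (Vf Q m τ) a (nxt a) := by
  by_cases ha : a = m
  · subst ha
    rw [fan_row Q τ (nxt_ne_self hn a)]
    have h := hcyc a
    simp [sgn, h]
  · by_cases hna : nxt a = m
    · rw [hna, fan_col Q τ ha]
      have h1 : Q m a < 0 := by
        have h2 := hcyc a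
        rw [hna] at h2
        have h3 := hanti a m
        linarith
      simp [sgn, not_lt.mpr h1.le]
    · rw [fan_step Q τ ha hna]
      exact hτ

def bse {n : ℕ} (k : Fin (n - 2)) : Fin n := ⟨k.1, lt_of_lt_of_le k.isLt (Nat.sub_le n 2)⟩

lemma general (hn : 3 ≤ n) (Q : Matrix (Fin n) (Fin n) ℝ)
    (hanti : ∀ a b, Q b a = -Q a b) (hreg : ∀ a b, a ≠ b → Q a b ≠ 0)
    (hcyc : ∀ a, 0 < Q a (nxt a)) :
    ∃ (K : ℕ) (U V : Fin K → Fin n → ℝ),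
      K ≤ 2 * (n - 3) + 1 ∧
      (∀ a b, 0 < Q a b ↔ 0 < ∑ k, Disk (U k) (V k) a b) ∧
      (∀ k a, 0 < Disk (U k) (V k) a (nxt a)) := by
  have hn3 : (3 : ℝ) ≤ (n : ℝ) := by exact_mod_cast hn
  have hn0 : (0 : ℝ) < (n : ℝ) := by linarith
  set τ : ℝ := 1 / (4 * (n : ℝ) ^ 3) with hτdef
  have hτ : 0 < τ := by positivity
  refine ⟨n - 2, fun k => Uf Q (bse k), fun k => Vf Q (bse k) τ, by omega, ?_, ?_⟩
  · intro a b
    show 0 < Q a b ↔ 0 < ∑ k : Fin (n - 2), Disk (Uf Q (bse k)) (Vf Q (bse k) τ) a b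
    by_cases hab : a = b
    · subst hab
      have hQ : Q a a = 0 := by have := hanti a a; linarith
      have hS : (∑ k : Fin (n - 2), Disk (Uf Q (bse k)) (Vf Q (bse k) τ) a a) = 0 :=
        Finset.sum_eq_zero (fun k _ => disk_diag _ _ a)
      rw [hQ, hS]
    · set F : Fin (n - 2) → ℝ := fun k => Disk (Uf Q (bse k)) (Vf Q (bse k) τ) a b with hFdef
      by_cases hm : a.1 < n - 2 ∨ b.1 < n - 2
      · set s : ℝ := if 0 < Q a b then 1 else -1 with hs
        have hsabs : |s| = 1 := by rw [hs]; split_ifs <;> norm_num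
        have hmain1 : ∀ k, bse k = a ∨ bse k = b → s * F k = 1 := by
          intro k hk
          rcases hk with h | h
          · have hF : F k = -sgn Q a b := by
              simp only [hFdef]
              rw [h]
              exact fan_row Q τ (Ne.symm hab)
            rw [hF, hs]
            unfold sgn
            split_ifs <;> norm_num
          · have hF : F k = sgn Q b a := by
              simp only [hFdef]
              rw [h]
              exact fan_col Q τ hab
            rw [hF, hs]
            by_cases hq : 0 < Q a b
            · have h2 : ¬ 0 < Q b a := by
                have := hanti a b; push_neg; linarith
              rw [if_pos hq]
              unfold sgn
              rw [if_neg h2]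
              norm_num
            · have hlt : Q a b < 0 := lt_of_le_of_ne (not_lt.mp hq) (hreg a b hab)
              have h2 : 0 < Q b a := by
                have := hanti a b; linarith
              rw [if_neg hq]
              unfold sgn
              rw [if_pos h2]
              norm_num
        have hbound : ∀ k, -(τ * (2 * n)) ≤ s * F k := by
          intro k
          by_cases hk : bse k = a ∨ bse k = b
          · rw [hmain1 k hk]
            have h0 : 0 < τ * (2 * (n : ℝ)) := by positivity
            linarith
          · push_neg at hk
            have h1 : |F k| ≤ τ * (2 * n) := by
              simp only [hFdef]
              exact fan_abs Q hτ.le (fun h => hk.1 h.symm) (fun h => hk.2 h.symm)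
            have h2 : |s * F k| = |F k| := by rw [abs_mul, hsabs, one_mul]
            calc -(τ * (2 * (n : ℝ))) ≤ -|s * F k| := by rw [h2]; linarith
              _ ≤ s * F k := neg_abs_le _
        obtain ⟨k₀, hk₀⟩ : ∃ k₀ : Fin (n - 2), s * F k₀ = 1 := by
          rcases hm with h | h
          · exact ⟨⟨a.1, h⟩, hmain1 _ (Or.inl (Fin.ext rfl))⟩
          · exact ⟨⟨b.1, h⟩, hmain1 _ (Or.inr (Fin.ext rfl))⟩
        have hcard : ((Finset.univ.erase k₀).card : ℝ) ≤ (n : ℝ) := by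
          have h1 : (Finset.univ.erase k₀).card ≤ n - 2 := by
            calc (Finset.univ.erase k₀).card
                ≤ (Finset.univ : Finset (Fin (n - 2))).card :=
                  Finset.card_le_card (Finset.erase_subset _ _)
              _ = n - 2 := by simp
          have h2 : (Finset.univ.erase k₀).card ≤ n := by omega
          exact_mod_cast h2
        have hsum : 1 - (n : ℝ) * (τ * (2 * n)) ≤ s * ∑ k, F k := by
          rw [Finset.mul_sum]
          rw [← Finset.add_sum_erase Finset.univ (fun k => s * F k) (Finset.mem_univ k₀)]
          have h5 : ((Finset.univ.erase k₀).card : ℝ) * (-(τ * (2 * n)))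
              ≤ ∑ x ∈ Finset.univ.erase k₀, s * F x := by
            have h7 := Finset.card_nsmul_le_sum (Finset.univ.erase k₀)
              (fun k => s * F k) (-(τ * (2 * (n : ℝ)))) (fun x _ => hbound x)
            simpa [nsmul_eq_mul] using h7
          have hp : (0 : ℝ) ≤ τ * (2 * (n : ℝ)) := by positivity
          have h6 : -((n : ℝ) * (τ * (2 * n)))
              ≤ ((Finset.univ.erase k₀).card : ℝ) * (-(τ * (2 * n))) := by
            nlinarith [hcard, hp]
          rw [hk₀]
          linarith
        have hnum : 0 < 1 - (n : ℝ) * (τ * (2 * n)) := by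
          have he : (n : ℝ) * (τ * (2 * n)) = 1 / (2 * (n : ℝ)) := by
            rw [hτdef]; field_simp; ring
          rw [he]
          have hlt : 1 / (2 * (n : ℝ)) < 1 := by
            rw [div_lt_one (by linarith : (0:ℝ) < 2 * (n:ℝ))]
            linarith
          linarith
        have hpos : 0 < s * ∑ k, F k := lt_of_lt_of_le hnum hsum
        by_cases hq : 0 < Q a b
        · rw [hs, if_pos hq, one_mul] at hpos
          exact iff_of_true hq hpos
        · rw [hs, if_neg hq] at hpos
          have hneg : ∑ k, F k < 0 := by linarith
          exact iff_of_false hq (not_lt.mpr hneg.le)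
      · push_neg at hm
        have hav := a.isLt
        have hbv := b.isLt
        have hvne : a.1 ≠ b.1 := fun h => hab (Fin.ext h)
        have hcases : (a.1 = n - 2 ∧ b.1 = n - 1) ∨ (a.1 = n - 1 ∧ b.1 = n - 2) := by omega
        rcases hcases with ⟨ha, hb⟩ | ⟨ha, hb⟩
        · have hba : b = nxt a := by
            apply Fin.ext
            show b.1 = (a.1 + 1) % n
            rw [hb, ha, show n - 2 + 1 = n - 1 from by omega,
              Nat.mod_eq_of_lt (by omega)]
          have hterm : ∀ k : Fin (n - 2), F k = τ := by
            intro k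
            have hik := k.isLt
            have hka : a ≠ bse k := fun h => by
              have hv : a.1 = k.1 := congrArg Fin.val h
              omega
            have hkb : nxt a ≠ bse k := fun h => by
              have hv : (nxt a).1 = k.1 := congrArg Fin.val h
              rw [← hba] at hv
              omega
            simp only [hFdef]
            rw [hba]
            exact fan_step Q τ hka hkb
          have hsum2 : ∑ k, F k = ((n - 2 : ℕ) : ℝ) * τ := by
            rw [Finset.sum_congr rfl (fun k _ => hterm k)]
            simp [Finset.sum_const, nsmul_eq_mul]
          have hQpos : 0 < Q a b := by rw [hba]; exact hcyc a
          have hSpos : 0 < ∑ k, F k := by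
            rw [hsum2]
            apply mul_pos _ hτ
            exact_mod_cast (by omega : 0 < n - 2)
          exact iff_of_true hQpos hSpos
        · have hba : a = nxt b := by
            apply Fin.ext
            show a.1 = (b.1 + 1) % n
            rw [ha, hb, show n - 2 + 1 = n - 1 from by omega,
              Nat.mod_eq_of_lt (by omega)]
          have hterm : ∀ k : Fin (n - 2), F k = -τ := by
            intro k
            have hik := k.isLt
            have hkb : b ≠ bse k := fun h => by
              have hv : b.1 = k.1 := congrArg Fin.val h
              omega
            have hka : nxt b ≠ bse k := fun h => by
              have hv : (nxt b).1 = k.1 := congrArg Fin.val h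
              rw [← hba] at hv
              omega
            simp only [hFdef]
            rw [disk_antisymm, hba]
            rw [fan_step Q τ hkb hka]
          have hsum2 : ∑ k, F k = -(((n - 2 : ℕ) : ℝ) * τ) := by
            rw [Finset.sum_congr rfl (fun k _ => hterm k)]
            simp [Finset.sum_const, nsmul_eq_mul]
          have hQneg : Q a b < 0 := by
            have h1 : 0 < Q b a := by rw [hba]; exact hcyc b
            have := hanti b a
            linarith
          have hSneg : ∑ k, F k < 0 := by
            rw [hsum2]
            have : (0:ℝ) < ((n - 2 : ℕ) : ℝ) * τ := by
              apply mul_pos _ hτ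
              exact_mod_cast (by omega : 0 < n - 2)
            linarith
          exact iff_of_false (not_lt.mpr hQneg.le) (not_lt.mpr hSneg.le)
  · intro k a
    exact fan_cyc Q (by omega) hanti hcyc (bse k) hτ a

lemma small3 (Q : Matrix (Fin 3) (Fin 3) ℝ) (hanti : ∀ a b, Q b a = -Q a b)
    (hcyc : ∀ a, 0 < Q a (nxt a)) :
    ∃ U V : Fin 3 → ℝ,
      (∀ a b, 0 < Q a b ↔ 0 < Disk U V a b) ∧ (∀ a, 0 < Disk U V a (nxt a)) := by
  have h01 : 0 < Q 0 1 := hcyc 0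
  have h12 : 0 < Q 1 2 := hcyc 1
  have h20 : 0 < Q 2 0 := hcyc 2
  refine ⟨![0, -1, 1], ![1, 0, -1], ?_, ?_⟩
  · intro a b
    fin_cases a <;> fin_cases b <;>
      simp [Disk, show (⟨2, by norm_num⟩ : Fin 3) = (2:Fin 3) from rfl] <;> norm_num <;>
      linarith [h01, h12, h20, hanti 0 1, hanti 1 2, hanti 2 0,
        hanti 0 0, hanti 1 1, hanti 2 2]
  · intro a
    fin_cases a <;> norm_num [Disk, nxt]

lemma small4 (Q : Matrix (Fin 4) (Fin 4) ℝ) (hanti : ∀ a b, Q b a = -Q a b)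
    (hreg : ∀ a b, a ≠ b → Q a b ≠ 0) (hcyc : ∀ a, 0 < Q a (nxt a)) :
    ∃ U V : Fin 4 → ℝ,
      (∀ a b, 0 < Q a b ↔ 0 < Disk U V a b) ∧ (∀ a, 0 < Disk U V a (nxt a)) := by
  have h01 : 0 < Q 0 1 := hcyc 0
  have h12 : 0 < Q 1 2 := hcyc 1
  have h23 : 0 < Q 2 3 := hcyc 2
  have h30 : 0 < Q 3 0 := hcyc 3
  by_cases h02 : 0 < Q 0 2 <;> by_cases h13 : 0 < Q 1 3
  · refine ⟨![0, -1, -1, 1], ![1, 0, -2, -1], ?_, ?_⟩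
    · intro a b
      fin_cases a <;> fin_cases b <;>
        simp [Disk, show (⟨2, by norm_num⟩ : Fin 4) = (2:Fin 4) from rfl,
          show (⟨3, by norm_num⟩ : Fin 4) = (3:Fin 4) from rfl] <;> norm_num <;>
        linarith [h01, h12, h23, h30, h02, h13, hanti 0 1, hanti 0 2, hanti 0 3,
          hanti 1 2, hanti 1 3, hanti 2 3, hanti 0 0, hanti 1 1, hanti 2 2, hanti 3 3]
    · intro a
      fin_cases a <;> norm_num [Disk, nxt]
  · have h13' : Q 1 3 < 0 := lt_of_le_of_ne (not_lt.mp h13) (hreg 1 3 (by decide))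
    refine ⟨![0, -1, -1, 1], ![1, 0, -2, 1], ?_, ?_⟩
    · intro a b
      fin_cases a <;> fin_cases b <;>
        simp [Disk, show (⟨2, by norm_num⟩ : Fin 4) = (2:Fin 4) from rfl,
          show (⟨3, by norm_num⟩ : Fin 4) = (3:Fin 4) from rfl] <;> norm_num <;>
        linarith [h01, h12, h23, h30, h02, h13', hanti 0 1, hanti 0 2, hanti 0 3,
          hanti 1 2, hanti 1 3, hanti 2 3, hanti 0 0, hanti 1 1, hanti 2 2, hanti 3 3]
    · intro a
      fin_cases a <;> norm_num [Disk, nxt]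
  · have h02' : Q 0 2 < 0 := lt_of_le_of_ne (not_lt.mp h02) (hreg 0 2 (by decide))
    refine ⟨![0, -1, 1, 1], ![1, 0, -2, -1], ?_, ?_⟩
    · intro a b
      fin_cases a <;> fin_cases b <;>
        simp [Disk, show (⟨2, by norm_num⟩ : Fin 4) = (2:Fin 4) from rfl,
          show (⟨3, by norm_num⟩ : Fin 4) = (3:Fin 4) from rfl] <;> norm_num <;>
        linarith [h01, h12, h23, h30, h02', h13, hanti 0 1, hanti 0 2, hanti 0 3,
          hanti 1 2, hanti 1 3, hanti 2 3, hanti 0 0, hanti 1 1, hanti 2 2, hanti 3 3]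
    · intro a
      fin_cases a <;> norm_num [Disk, nxt]
  · have h02' : Q 0 2 < 0 := lt_of_le_of_ne (not_lt.mp h02) (hreg 0 2 (by decide))
    have h13' : Q 1 3 < 0 := lt_of_le_of_ne (not_lt.mp h13) (hreg 1 3 (by decide))
    refine ⟨![0, -1, 1, 1], ![1, 0, -2, 1], ?_, ?_⟩
    · intro a b
      fin_cases a <;> fin_cases b <;>
        simp [Disk, show (⟨2, by norm_num⟩ : Fin 4) = (2:Fin 4) from rfl,
          show (⟨3, by norm_num⟩ : Fin 4) = (3:Fin 4) from rfl] <;> norm_num <;>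
        linarith [h01, h12, h23, h30, h02', h13', hanti 0 1, hanti 0 2, hanti 0 3,
          hanti 1 2, hanti 1 3, hanti 2 3, hanti 0 0, hanti 1 1, hanti 2 2, hanti 3 3]
    · intro a
      fin_cases a <;> norm_num [Disk, nxt]

end CyclicDiskAux


/-- **Corollary 3.1 (number of cyclic components capturing a cyclic game):**
if `n ≤ 4` one cyclic disk suffices to capture the sign pattern of a cyclic game;
if `n ≥ 5` at most `2(n-3)+1` cyclic disks suffice, each admitting the same
length-`n` cycle. -/
theorem cyclic_disk_count_bound
    (n : ℕ)
    (P : Matrix (Fin n) (Fin n) ℝ)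
    (hanti : Pᵀ = -P)
    (hreg : ∀ i j, i ≠ j → P i j ≠ 0)
    (γ : Equiv.Perm (Fin n))
    (hcyc : AdmitsCycle P γ) :
    (n ≤ 4 →
      ∃ u v : Fin n → ℝ,
        (∀ i j, 0 < P i j ↔ 0 < Disk u v i j) ∧ AdmitsCycle (Disk u v) γ) ∧
    (5 ≤ n →
      ∃ (K : ℕ) (u v : Fin K → Fin n → ℝ),
        K ≤ 2 * (n - 3) + 1 ∧
        (∀ i j, 0 < P i j ↔ 0 < (∑ k, Disk (u k) (v k)) i j) ∧
        (∀ k, AdmitsCycle (Disk (u k) (v k)) γ)) := by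
  classical
  have hQanti : ∀ a b : Fin n, (fun a b => P (γ a) (γ b)) b a = -(fun a b => P (γ a) (γ b)) a b := by
    intro a b
    have h := congrFun (congrFun hanti (γ a)) (γ b)
    simpa [Matrix.transpose_apply, Matrix.neg_apply] using h
  have hQreg : ∀ a b : Fin n, a ≠ b → (fun a b => P (γ a) (γ b)) a b ≠ 0 := fun a b hab =>
    hreg _ _ (fun h => hab (γ.injective h))
  have hQcyc : ∀ a : Fin n, 0 < (fun a b => P (γ a) (γ b)) a (nxt a) := fun a => hcyc a
  constructor
  · intro hn4
    interval_cases n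
    · exact ⟨fun i => i.elim0, fun i => i.elim0, fun i j => i.elim0, fun i => i.elim0⟩
    · exfalso
      have h := hQcyc 0
      have h2 := hQanti 0 0
      have e : nxt (0 : Fin 1) = 0 := rfl
      rw [e] at h
      simp only at h h2
      linarith
    · exfalso
      have h0 := hQcyc 0
      have h1 := hQcyc 1
      have h2 := hQanti 0 1
      have e0 : nxt (0 : Fin 2) = 1 := rfl
      have e1 : nxt (1 : Fin 2) = 0 := rfl
      rw [e0] at h0; rw [e1] at h1
      simp only at h0 h1 h2
      linarith
    · obtain ⟨U, V, hs, hc⟩ :=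
        CyclicDiskAux.small3 (fun a b => P (γ a) (γ b)) hQanti hQcyc
      refine ⟨fun x => U (γ.symm x), fun x => V (γ.symm x), ?_, ?_⟩
      · intro i j
        have h := hs (γ.symm i) (γ.symm j)
        simp only [Equiv.apply_symm_apply] at h
        exact h
      · intro i
        simpa [Disk] using hc i
    · obtain ⟨U, V, hs, hc⟩ :=
        CyclicDiskAux.small4 (fun a b => P (γ a) (γ b)) hQanti hQreg hQcyc
      refine ⟨fun x => U (γ.symm x), fun x => V (γ.symm x), ?_, ?_⟩
      · intro i j
        have h := hs (γ.symm i) (γ.symm j)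
        simp only [Equiv.apply_symm_apply] at h
        exact h
      · intro i
        simpa [Disk] using hc i
  · intro hn5
    obtain ⟨K, U, V, hK, hs, hc⟩ :=
      CyclicDiskAux.general (by omega) (fun a b => P (γ a) (γ b)) hQanti hQreg hQcyc
    refine ⟨K, fun k x => U k (γ.symm x), fun k x => V k (γ.symm x), hK, ?_, ?_⟩
    · intro i j
      have h := hs (γ.symm i) (γ.symm j)
      simp only [Equiv.apply_symm_apply] at h
      rw [Matrix.sum_apply]
      exact h
    · intro k i
      simpa [Disk] using hc k i
end

section
/- There exist an integer n, an n×n real antisymmetric matrix P with entries in [−1,1] that is regular and transitive, and vectors u¹,v¹,u²,v² ∈ ℝⁿ that are pairwise orthogonal, such that P = Disk(u¹,v¹) + Disk(u²,v²) and neither Disk(u¹,v¹) nor Disk(u²,v²) is transitive (both components are cyclic). In particular, the normal (Schur) decomposition of a transitive game can consist exactly of two cyclic components. (The paper exhibits such an example with n = 5.) -/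
open Matrix

/-- `A` is a transitive matrix. -/
def IsTransitive {n : ℕ} (A : Matrix (Fin n) (Fin n) ℝ) : Prop :=
  ∀ i j k, 0 < A i j → 0 < A j k → 0 < A i k

/-- `A` is a cyclic matrix: some permutation yields a length-`n` cycle. -/
def IsCyclic' {n : ℕ} (A : Matrix (Fin n) (Fin n) ℝ) : Prop :=
  ∃ γ : Equiv.Perm (Fin n), ∀ i : Fin n, 0 < A (γ i) (γ (nxt i))

noncomputable def myU1 : Fin 5 → ℝ := ![2/354, 1/354, -4/354, -3/354, 0]
noncomputable def myV1 : Fin 5 → ℝ := ![-28, -39, -14, -13, 30]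
noncomputable def myU2 : Fin 5 → ℝ := ![-3/354, 2/354, 2/354, -4/354, -1/354]
noncomputable def myV2 : Fin 5 → ℝ := ![-43, -2, -40, 24, -51]

def myPerm1 : Equiv.Perm (Fin 5) :=
  ⟨![0, 4, 2, 3, 1], ![0, 4, 2, 3, 1], by decide, by decide⟩

def myPerm2 : Equiv.Perm (Fin 5) :=
  ⟨![0, 4, 2, 1, 3], ![0, 3, 2, 4, 1], by decide, by decide⟩

/-- The explicit value of the sum of the two disks. -/
noncomputable def myP : Matrix (Fin 5) (Fin 5) ℝ :=
  !![0, 42/354, 66/354, -354/354, 170/354;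
     -42/354, 0, -246/354, -90/354, -74/354;
     -66/354, 246/354, 0, -102/354, -262/354;
     354/354, 90/354, 102/354, 0, 138/354;
     -170/354, 74/354, 262/354, -138/354, 0]

set_option maxHeartbeats 2000000 in
lemma myP_eq : Disk myU1 myV1 + Disk myU2 myV2 = myP := by
  ext i j
  fin_cases i <;> fin_cases j <;>
    norm_num [Disk, Matrix.add_apply, myU1, myV1, myU2, myV2, myP]

set_option maxHeartbeats 2000000 in
lemma myP_transpose : myPᵀ = -myP := by
  ext i j
  fin_cases i <;> fin_cases j <;> norm_num [myP]

set_option maxHeartbeats 2000000 in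
lemma myP_bounded : ∀ i j, myP i j ∈ Set.Icc (-1 : ℝ) 1 := by
  intro i j
  fin_cases i <;> fin_cases j <;> norm_num [myP, Set.mem_Icc]

set_option maxHeartbeats 2000000 in
lemma myP_regular : ∀ i j : Fin 5, i ≠ j → myP i j ≠ 0 := by
  intro i j hij
  fin_cases i <;> fin_cases j <;> revert hij <;> norm_num [myP]

set_option maxHeartbeats 4000000 in
lemma myP_transitive : IsTransitive myP := by
  intro i j k
  fin_cases i <;> fin_cases j <;> fin_cases k <;> norm_num [myP]

set_option maxHeartbeats 2000000 in
lemma myD1_not_transitive : ¬ IsTransitive (Disk myU1 myV1) := by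
  intro h
  have := h 0 4 2 (by norm_num [Disk, myU1, myV1, Matrix.cons_val_two, Matrix.cons_val_three, Matrix.cons_val_four]) (by norm_num [Disk, myU1, myV1, Matrix.cons_val_two, Matrix.cons_val_three, Matrix.cons_val_four])
  norm_num [Disk, myU1, myV1, Matrix.cons_val_two, Matrix.cons_val_three, Matrix.cons_val_four] at this

set_option maxHeartbeats 2000000 in
lemma myD2_not_transitive : ¬ IsTransitive (Disk myU2 myV2) := by
  intro h
  have := h 0 1 3 (by norm_num [Disk, myU2, myV2, Matrix.cons_val_two, Matrix.cons_val_three, Matrix.cons_val_four]) (by norm_num [Disk, myU2, myV2, Matrix.cons_val_two, Matrix.cons_val_three, Matrix.cons_val_four])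
  norm_num [Disk, myU2, myV2, Matrix.cons_val_two, Matrix.cons_val_three, Matrix.cons_val_four] at this

set_option maxHeartbeats 2000000 in
lemma myD1_cyclic : IsCyclic' (Disk myU1 myV1) := by
  refine ⟨myPerm1, ?_⟩
  intro i
  fin_cases i <;> norm_num [Disk, myPerm1, nxt, myU1, myV1, Equiv.coe_fn_mk, Matrix.cons_val_two, Matrix.cons_val_three, Matrix.cons_val_four]

set_option maxHeartbeats 2000000 in
lemma myD2_cyclic : IsCyclic' (Disk myU2 myV2) := by
  refine ⟨myPerm2, ?_⟩
  intro i
  fin_cases i <;> norm_num [Disk, myPerm2, nxt, myU2, myV2, Equiv.coe_fn_mk, Matrix.cons_val_two, Matrix.cons_val_three, Matrix.cons_val_four]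

set_option maxHeartbeats 2000000 in
lemma my_orth :
    (∑ i, myU1 i * myV1 i = 0) ∧ (∑ i, myU1 i * myU2 i = 0) ∧
    (∑ i, myU1 i * myV2 i = 0) ∧ (∑ i, myV1 i * myU2 i = 0) ∧
    (∑ i, myV1 i * myV2 i = 0) ∧ (∑ i, myU2 i * myV2 i = 0) := by
  refine ⟨?_, ?_, ?_, ?_, ?_, ?_⟩ <;>
    norm_num [Fin.sum_univ_five, myU1, myV1, myU2, myV2, Matrix.cons_val_two, Matrix.cons_val_three, Matrix.cons_val_four]

/-- **Proposition 1 (last claim):** there is a regular transitive game whose normal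
(Schur) decomposition consists exactly of two cyclic (non-transitive) disk components
built from pairwise orthogonal vectors. -/
theorem exists_transitive_game_with_two_cyclic_components :
    ∃ (n : ℕ) (P : Matrix (Fin n) (Fin n) ℝ) (u₁ v₁ u₂ v₂ : Fin n → ℝ),
      Pᵀ = -P ∧
      (∀ i j, P i j ∈ Set.Icc (-1 : ℝ) 1) ∧
      (∀ i j, i ≠ j → P i j ≠ 0) ∧
      IsTransitive P ∧
      (∑ i, u₁ i * v₁ i = 0) ∧ (∑ i, u₁ i * u₂ i = 0) ∧ (∑ i, u₁ i * v₂ i = 0) ∧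
      (∑ i, v₁ i * u₂ i = 0) ∧ (∑ i, v₁ i * v₂ i = 0) ∧ (∑ i, u₂ i * v₂ i = 0) ∧
      P = Disk u₁ v₁ + Disk u₂ v₂ ∧
      ¬ IsTransitive (Disk u₁ v₁) ∧ ¬ IsTransitive (Disk u₂ v₂) ∧
      IsCyclic' (Disk u₁ v₁) ∧ IsCyclic' (Disk u₂ v₂) := by
  obtain ⟨h1, h2, h3, h4, h5, h6⟩ := my_orth
  exact ⟨5, myP, myU1, myV1, myU2, myV2, myP_transpose, myP_bounded, myP_regular,
    myP_transitive, h1, h2, h3, h4, h5, h6, myP_eq.symm, myD1_not_transitive,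
    myD2_not_transitive, myD1_cyclic, myD2_cyclic⟩
end

section
/- For all real x, |tanh(x/2) − x/2| ≤ |x|³/24. Equivalently, with σ(x) := 1/(1+e^{−x}) the sigmoid and f(x) := 2σ(x) − 1 = tanh(x/2), one has |f(x) − x/2| ≤ |x|³/24 for all x ∈ ℝ. -/
open Real intervalIntegral

lemma hasDerivAt_tanh' (t : ℝ) :
    HasDerivAt Real.tanh (1 - Real.tanh t ^ 2) t := by
  have hc : Real.cosh t ≠ 0 := (Real.cosh_pos t).ne'
  have h := (Real.hasDerivAt_sinh t).div (Real.hasDerivAt_cosh t) hc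
  have he : (Real.cosh t * Real.cosh t - Real.sinh t * Real.sinh t) / Real.cosh t ^ 2
      = 1 - Real.tanh t ^ 2 := by
    rw [Real.tanh_eq_sinh_div_cosh]
    field_simp
  have hfun : (fun y => Real.sinh y / Real.cosh y) = Real.tanh := by
    funext y; exact (Real.tanh_eq_sinh_div_cosh y).symm
  rw [← hfun]
  simp only [Real.tanh_eq_sinh_div_cosh] at he
  exact he ▸ h

lemma abs_tanh_le (t : ℝ) : |Real.tanh t| ≤ |t| := by
  have h : ∀ s ∈ Set.univ, HasDerivWithinAt Real.tanh (1 - Real.tanh s ^ 2) Set.univ s :=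
    fun s _ => (hasDerivAt_tanh' s).hasDerivWithinAt
  have hb : ∀ s ∈ Set.univ, ‖1 - Real.tanh s ^ 2‖ ≤ 1 := by
    intro s _
    have h1 : Real.tanh s ^ 2 ≥ 0 := sq_nonneg _
    have h2 : Real.tanh s ^ 2 < 1 := by
      have hc := Real.cosh_pos s
      have := Real.cosh_sq_sub_sinh_sq s
      rw [Real.tanh_eq_sinh_div_cosh, div_pow]
      rw [div_lt_one (by positivity)]
      nlinarith
    rw [Real.norm_eq_abs, abs_le]; constructor <;> nlinarith
  have := convex_univ.norm_image_sub_le_of_norm_hasDerivWithin_le h hb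
    (Set.mem_univ 0) (Set.mem_univ t)
  simpa [Real.tanh_zero] using this

lemma key (u : ℝ) (hu : 0 ≤ u) : |Real.tanh u - u| ≤ u ^ 3 / 3 := by
  have hderiv : ∀ s ∈ Set.uIcc 0 u,
      HasDerivAt (fun t => Real.tanh t - t) (-(Real.tanh s ^ 2)) s := by
    intro s _
    have := (hasDerivAt_tanh' s).sub (hasDerivAt_id s)
    exact this.congr_deriv (by ring)
  have hcont : Continuous Real.tanh := by
    have : Real.tanh = fun t => Real.sinh t / Real.cosh t := by
      funext t; exact Real.tanh_eq_sinh_div_cosh t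
    rw [this]
    exact Real.continuous_sinh.div Real.continuous_cosh fun t => (Real.cosh_pos t).ne'
  have hint : IntervalIntegrable (fun s => -(Real.tanh s ^ 2)) MeasureTheory.volume 0 u :=
    (((hcont.pow 2).neg).intervalIntegrable 0 u)
  have heq := intervalIntegral.integral_eq_sub_of_hasDerivAt hderiv hint
  simp only [Real.tanh_zero, sub_zero] at heq
  -- heq : ∫ s in 0..u, -(tanh s ^ 2) = tanh u - u
  rw [← heq]
  have h1 : |∫ s in (0:ℝ)..u, -(Real.tanh s ^ 2)| ≤ ∫ s in (0:ℝ)..u, s ^ 2 := by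
    rw [intervalIntegral.integral_neg, abs_neg]
    have habs : |∫ s in (0:ℝ)..u, Real.tanh s ^ 2| ≤ ∫ s in (0:ℝ)..u, Real.tanh s ^ 2 := by
      have : 0 ≤ ∫ s in (0:ℝ)..u, Real.tanh s ^ 2 :=
        intervalIntegral.integral_nonneg hu (fun s _ => sq_nonneg _)
      rw [abs_of_nonneg this]
    refine habs.trans ?_
    apply intervalIntegral.integral_mono_on hu
      ((hcont.pow 2).intervalIntegrable 0 u)
      ((continuous_id.pow 2).intervalIntegrable 0 u)
    intro s hs
    have h2 := abs_tanh_le s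
    have : |Real.tanh s| ^ 2 ≤ |s| ^ 2 := by
      exact pow_le_pow_left₀ (abs_nonneg _) h2 2
    simpa [sq_abs] using this
  have h2 : (∫ s in (0:ℝ)..u, s ^ 2) = u ^ 3 / 3 := by
    simp [integral_pow]; ring
  linarith [h1]

/-- **The cubic estimate used in the proof of Theorem 1:**
`|tanh (x/2) - x/2| ≤ |x|³ / 24` for all real `x`.  (Here
`tanh (x/2) = 2 σ x - 1` with `σ` the sigmoid function.) -/
theorem abs_tanh_half_sub_half_le (x : ℝ) :
    |Real.tanh (x / 2) - x / 2| ≤ |x| ^ 3 / 24 := by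
  rcases le_or_gt 0 x with hx | hx
  · have := key (x / 2) (by linarith)
    rw [abs_of_nonneg hx]
    calc |Real.tanh (x / 2) - x / 2| ≤ (x / 2) ^ 3 / 3 := this
      _ = x ^ 3 / 24 := by ring
  · have := key (-x / 2) (by linarith)
    rw [abs_of_neg hx]
    have hneg : Real.tanh (x / 2) - x / 2 = -(Real.tanh (-x / 2) - -x / 2) := by
      rw [show (-x / 2 : ℝ) = -(x / 2) by ring, Real.tanh_neg]; ring
    rw [hneg, abs_neg]
    calc |Real.tanh (-x / 2) - -x / 2| ≤ (-x / 2) ^ 3 / 3 := this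
      _ = (-x) ^ 3 / 24 := by ring
end

section
/- For every α > 0, the function x ↦ 2·arctanh(x)³ − 3αx has exactly one root in the open interval (0,1); that is, there is a unique x_α ∈ (0,1) with 2·arctanh(x_α)³ = 3α·x_α, and moreover 2·arctanh(x)³ ≤ 3αx for all 0 ≤ x ≤ x_α. -/
open Set

lemma arctanh_hasDerivAt {x : ℝ} (hx : x ∈ Ioo (-1:ℝ) 1) :
    HasDerivAt arctanh (1 / (1 - x ^ 2)) x := by
  obtain ⟨h1, h2⟩ := hx
  have ha : (0:ℝ) < 1 + x := by linarith
  have hb : (0:ℝ) < 1 - x := by linarith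
  have l1 : HasDerivAt (fun y : ℝ => Real.log (1 + y)) ((1 + x)⁻¹ * 1) x :=
    (Real.hasDerivAt_log ha.ne').comp x ((hasDerivAt_id x).const_add 1)
  have l2 : HasDerivAt (fun y : ℝ => Real.log (1 - y)) ((1 - x)⁻¹ * (-1)) x :=
    (Real.hasDerivAt_log hb.ne').comp x ((hasDerivAt_id x).const_sub 1)
  have hg : HasDerivAt (fun y : ℝ => (1/2) * (Real.log (1 + y) - Real.log (1 - y)))
      ((1/2) * ((1 + x)⁻¹ * 1 - (1 - x)⁻¹ * (-1))) x := (l1.sub l2).const_mul (1/2)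
  have hev : arctanh =ᶠ[nhds x] fun y : ℝ => (1/2) * (Real.log (1 + y) - Real.log (1 - y)) := by
    have hopen : IsOpen (Ioo (-1:ℝ) 1) := isOpen_Ioo
    filter_upwards [hopen.mem_nhds ⟨h1, h2⟩] with y hy
    have ha' : (1:ℝ) + y ≠ 0 := by have := hy.1; intro h; linarith
    have hb' : (1:ℝ) - y ≠ 0 := by have := hy.2; intro h; linarith
    simp [arctanh, Real.log_div ha' hb']
  have := hg.congr_of_eventuallyEq hev
  refine this.congr_deriv ?_
  have h2' : (1:ℝ) - x ^ 2 ≠ 0 := by nlinarith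
  field_simp
  ring

lemma arctanh_pos {x : ℝ} (h0 : 0 < x) (h1 : x < 1) : 0 < arctanh x := by
  have : (1:ℝ) < (1 + x) / (1 - x) := by
    rw [lt_div_iff₀ (by linarith)]; linarith
  have := Real.log_pos this
  unfold arctanh; linarith

lemma arctanh_lt {x : ℝ} (hx : x ∈ Ioo (0:ℝ) 1) : arctanh x < x / (1 - x ^ 2) := by
  set u : ℝ → ℝ := fun y => y / (1 - y ^ 2) - arctanh y with hu
  have key : ∀ y ∈ Ioo (-1:ℝ) 1, HasDerivAt u (2 * y ^ 2 / (1 - y ^ 2) ^ 2) y := by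
    intro y hy
    have hy2 : (1:ℝ) - y ^ 2 ≠ 0 := by
      obtain ⟨a, b⟩ := hy; nlinarith
    have d1 : HasDerivAt (fun z : ℝ => z / (1 - z ^ 2))
        ((1 * (1 - y ^ 2) - y * (0 - 2 * y ^ 1)) / (1 - y ^ 2) ^ 2) y :=
      (hasDerivAt_id y).div ((hasDerivAt_const y 1).sub (hasDerivAt_pow 2 y)) hy2
    have := d1.sub (arctanh_hasDerivAt hy)
    refine this.congr_deriv ?_
    field_simp
    ring
  have hmono : StrictMonoOn u (Ico (0:ℝ) 1) := by
    apply strictMonoOn_of_deriv_pos (convex_Ico 0 1)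
    · intro y hy
      exact (key y ⟨by linarith [hy.1], hy.2⟩).continuousAt.continuousWithinAt
    · intro y hy
      rw [interior_Ico] at hy
      rw [(key y ⟨by linarith [hy.1], hy.2⟩).deriv]
      have hy2 : (0:ℝ) < 1 - y ^ 2 := by nlinarith [hy.1, hy.2]
      apply div_pos (by nlinarith [hy.1]) (by positivity)
  have h0 : u 0 = 0 := by simp [hu, arctanh]
  have := hmono (by constructor <;> norm_num) ⟨hx.1.le, hx.2⟩ hx.1
  rw [h0] at this
  simp only [hu] at this
  linarith

lemma arctanh_continuousOn : ContinuousOn arctanh (Ioo (-1:ℝ) 1) :=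
  fun _ hx => (arctanh_hasDerivAt hx).continuousAt.continuousWithinAt

noncomputable def Hfun : ℝ → ℝ := fun x => arctanh x ^ 3 / x

lemma Hfun_hasDerivAt {x : ℝ} (hx : x ∈ Ioo (0:ℝ) 1) :
    HasDerivAt Hfun ((3 * arctanh x ^ 2 * (1 / (1 - x ^ 2)) * x - arctanh x ^ 3 * 1) / x ^ 2) x := by
  have hx' : x ∈ Ioo (-1:ℝ) 1 := ⟨by linarith [hx.1], hx.2⟩
  exact ((arctanh_hasDerivAt hx').pow 3).div (hasDerivAt_id x) hx.1.ne'

lemma Hfun_strictMonoOn : StrictMonoOn Hfun (Ioo (0:ℝ) 1) := by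
  apply strictMonoOn_of_deriv_pos (convex_Ioo 0 1)
  · intro y hy
    exact (Hfun_hasDerivAt hy).continuousAt.continuousWithinAt
  · intro y hy
    rw [interior_Ioo] at hy
    rw [(Hfun_hasDerivAt hy).deriv]
    have hA : 0 < arctanh y := arctanh_pos hy.1 hy.2
    have hlt : arctanh y < y / (1 - y ^ 2) := arctanh_lt hy
    have hy2 : (0:ℝ) < 1 - y ^ 2 := by nlinarith [hy.1, hy.2]
    have hnum : 0 < 3 * arctanh y ^ 2 * (1 / (1 - y ^ 2)) * y - arctanh y ^ 3 * 1 := by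
      have h1 : arctanh y ^ 3 < arctanh y ^ 2 * (y / (1 - y ^ 2)) := by
        have := mul_lt_mul_of_pos_left hlt (by positivity : (0:ℝ) < arctanh y ^ 2)
        calc arctanh y ^ 3 = arctanh y ^ 2 * arctanh y := by ring
        _ < arctanh y ^ 2 * (y / (1 - y ^ 2)) := this
      have h2 : arctanh y ^ 2 * (y / (1 - y ^ 2)) ≤ 3 * arctanh y ^ 2 * (1 / (1 - y ^ 2)) * y := by
        rw [div_eq_mul_inv, div_eq_mul_inv]
        nlinarith [mul_nonneg (mul_nonneg (sq_nonneg (arctanh y)) hy.1.le) (inv_pos.mpr hy2).le]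
      linarith
    exact div_pos hnum (pow_pos hy.1 2)

/-- For every `α > 0` the function `x ↦ 2 arctanh(x)³ - 3αx` has a unique root
`xα` in `(0,1)`, and `2 arctanh(x)³ ≤ 3αx` for all `0 ≤ x ≤ xα`. -/
theorem exists_unique_root_arctanh_cubed (α : ℝ) (hα : 0 < α) :
    ∃ xα ∈ Set.Ioo (0 : ℝ) 1,
      2 * arctanh xα ^ 3 = 3 * α * xα ∧
      (∀ y ∈ Set.Ioo (0 : ℝ) 1, 2 * arctanh y ^ 3 = 3 * α * y → y = xα) ∧
      (∀ x, 0 ≤ x → x ≤ xα → 2 * arctanh x ^ 3 ≤ 3 * α * x) := by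
  set β : ℝ := 3 * α / 2 with hβ
  have hβpos : 0 < β := by positivity
  -- point a with Hfun a < β
  set a : ℝ := min (1/2) (Real.sqrt β / 3) with ha
  have hapos : 0 < a := lt_min (by norm_num) (by positivity)
  have ha1 : a < 1 := lt_of_le_of_lt (min_le_left _ _) (by norm_num)
  have haIoo : a ∈ Ioo (0:ℝ) 1 := ⟨hapos, ha1⟩
  have hHa : Hfun a < β := by
    have ha2 : a ≤ 1/2 := min_le_left _ _
    have hsq : a ^ 2 ≤ β / 9 := by
      have h1 : a ≤ Real.sqrt β / 3 := min_le_right _ _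
      have h2 : (Real.sqrt β / 3) ^ 2 = β / 9 := by
        rw [div_pow, Real.sq_sqrt hβpos.le]; norm_num
      calc a ^ 2 ≤ (Real.sqrt β / 3) ^ 2 := by nlinarith
      _ = β / 9 := h2
    have hlt : arctanh a < 2 * a := by
      have := arctanh_lt haIoo
      have h12 : (0:ℝ) < 1 - a ^ 2 := by nlinarith
      have : a / (1 - a ^ 2) ≤ 2 * a := by
        rw [div_le_iff₀ h12]; nlinarith
      linarith
    have hApos : 0 < arctanh a := arctanh_pos hapos ha1
    have hcube : arctanh a ^ 3 < 8 * a ^ 3 := by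
      have h3 := pow_lt_pow_left₀ hlt hApos.le (n := 3) (by norm_num)
      calc arctanh a ^ 3 < (2 * a) ^ 3 := h3
      _ = 8 * a ^ 3 := by ring
    have : Hfun a < 8 * a ^ 3 / a := by
      unfold Hfun
      exact (div_lt_div_iff_of_pos_right hapos).mpr hcube
    calc Hfun a < 8 * a ^ 3 / a := this
    _ = 8 * a ^ 2 := by field_simp
    _ ≤ 8 * (β / 9) := by linarith
    _ < β := by linarith
  -- point b with Hfun b > β
  set M : ℝ := max 1 β with hM
  have hM1 : (1:ℝ) ≤ M := le_max_left _ _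
  have hMβ : β ≤ M := le_max_right _ _
  set b : ℝ := 1 - Real.exp (-(2 * M)) with hb
  have hbe : Real.exp (-(2 * M)) < 1 := by
    rw [Real.exp_lt_one_iff]; nlinarith
  have hb0 : 0 < b := by simp only [hb]; linarith
  have hb1 : b < 1 := by
    have := Real.exp_pos (-(2 * M)); simp only [hb]; linarith
  have hbIoo : b ∈ Ioo (0:ℝ) 1 := ⟨hb0, hb1⟩
  have hHb : β < Hfun b := by
    have harc : M ≤ arctanh b := by
      have h1b : (1:ℝ) - b = Real.exp (-(2 * M)) := by simp [hb]
      have hpos : (0:ℝ) < 1 - b := by rw [h1b]; exact Real.exp_pos _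
      have hratio : Real.exp (2 * M) ≤ (1 + b) / (1 - b) := by
        rw [le_div_iff₀ hpos, h1b, ← Real.exp_add]
        simp only [add_neg_cancel, Real.exp_zero]
        linarith
      have hlog : 2 * M ≤ Real.log ((1 + b) / (1 - b)) := by
        have := Real.log_le_log (Real.exp_pos _) hratio
        rwa [Real.log_exp] at this
      unfold arctanh; linarith
    have hApos : 0 < arctanh b := lt_of_lt_of_le (by linarith) harc
    have hcube : β ≤ arctanh b ^ 3 := by
      have : M ^ 3 ≤ arctanh b ^ 3 := pow_le_pow_left₀ (by linarith) harc 3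
      have hM3 : β ≤ M ^ 3 := by
        nlinarith [mul_nonneg (mul_nonneg (by linarith : (0:ℝ) ≤ M) (by linarith : (0:ℝ) ≤ M - 1)) (by linarith : (0:ℝ) ≤ M + 1)]
      linarith
    have : arctanh b ^ 3 < Hfun b := by
      unfold Hfun
      rw [lt_div_iff₀ hb0]
      nlinarith [pow_pos hApos 3]
    linarith
  -- a < b
  have hab : a < b := by
    by_contra h
    push_neg at h
    rcases eq_or_lt_of_le h with h | h
    · rw [← h] at hHa; linarith
    · have := Hfun_strictMonoOn hbIoo haIoo h; linarith
  -- IVT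
  have hsub : Icc a b ⊆ Ioo (0:ℝ) 1 := fun y hy => ⟨lt_of_lt_of_le hapos hy.1, lt_of_le_of_lt hy.2 hb1⟩
  have hcont : ContinuousOn Hfun (Icc a b) := fun y hy =>
    (Hfun_hasDerivAt (hsub hy)).continuousAt.continuousWithinAt
  have hIVT := intermediate_value_Ioo hab.le hcont
  have hmem : β ∈ Ioo (Hfun a) (Hfun b) := ⟨hHa, hHb⟩
  obtain ⟨c, hc, hHc⟩ := hIVT hmem
  have hcIoo : c ∈ Ioo (0:ℝ) 1 := ⟨lt_trans hapos hc.1, lt_trans hc.2 hb1⟩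
  have hceq : 2 * arctanh c ^ 3 = 3 * α * c := by
    have : arctanh c ^ 3 = β * c := by
      have := hHc
      unfold Hfun at this
      rw [div_eq_iff hcIoo.1.ne'] at this
      linarith [this]
    rw [hβ] at this; linarith
  refine ⟨c, hcIoo, hceq, ?_, ?_⟩
  · intro y hy hyeq
    have hHy : Hfun y = β := by
      unfold Hfun
      rw [div_eq_iff hy.1.ne', hβ]
      linarith
    exact Hfun_strictMonoOn.injOn hy hcIoo (by rw [hHy, hHc])
  · intro x hx0 hxc
    rcases eq_or_lt_of_le hx0 with h | h
    · simp [← h, arctanh]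
    · have hxIoo : x ∈ Ioo (0:ℝ) 1 := ⟨h, lt_of_le_of_lt hxc hcIoo.2⟩
      have hHx : Hfun x ≤ β := by
        rcases eq_or_lt_of_le hxc with h' | h'
        · rw [h', hHc]
        · exact le_of_lt (by rw [← hHc]; exact Hfun_strictMonoOn hxIoo hcIoo h')
      have : arctanh x ^ 3 ≤ β * x := by
        have := (div_le_iff₀ h).mp hHx
        unfold Hfun at hHx
        rw [div_le_iff₀ h] at hHx
        linarith
      rw [hβ] at this; linarith
end

section
/- Let n ≥ 1 and let P̃ be an n×n real matrix with entries in the open interval (0,1) satisfying P̃_ij + P̃_ji = 1 for all i,j. Define the loss L(ε) := ∑_{i,j} [−P̃_ij · ln σ(ε_i − ε_j) − (1 − P̃_ij) · ln(1 − σ(ε_i − ε_j))] for ε ∈ ℝⁿ, where σ(x) = 1/(1+e^{−x}). If ε is a global minimizer of L, then for every i: ∑_{k=1}^n σ(ε_i − ε_k) = ∑_{k=1}^n P̃_ik. -/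
lemma sigmoid_pos (x : ℝ) : 0 < sigmoid x := by
  unfold sigmoid; positivity

lemma sigmoid_lt_one (x : ℝ) : sigmoid x < 1 := by
  unfold sigmoid
  rw [div_lt_one (by positivity)]
  linarith [Real.exp_pos (-x)]

lemma sigmoid_neg (x : ℝ) : sigmoid (-x) = 1 - sigmoid x := by
  unfold sigmoid
  rw [neg_neg, Real.exp_neg]
  have h := Real.exp_pos x
  field_simp
  ring

lemma sigmoid_hasDerivAt (x : ℝ) :
    HasDerivAt sigmoid (sigmoid x * (1 - sigmoid x)) x := by
  have he : (0:ℝ) < 1 + Real.exp (-x) := by positivity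
  have h1 : HasDerivAt (fun y : ℝ => 1 + Real.exp (-y)) (-Real.exp (-x)) x := by
    simpa using (hasDerivAt_const x (1:ℝ)).fun_add ((hasDerivAt_neg x).exp)
  have h2 := h1.fun_inv he.ne'
  have hfun : (fun y : ℝ => (1 + Real.exp (-y))⁻¹) = sigmoid := by
    funext y; simp [sigmoid, one_div]
  rw [hfun] at h2
  refine h2.congr_deriv ?_
  unfold sigmoid
  field_simp
  ring

lemma term_hasDerivAt (P x : ℝ) :
    HasDerivAt (fun y : ℝ => -P * Real.log (sigmoid y) - (1 - P) * Real.log (1 - sigmoid y))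
      (sigmoid x - P) x := by
  have h0 := sigmoid_pos x
  have h1 := sigmoid_lt_one x
  have hd := sigmoid_hasDerivAt x
  have l1 := (hd.log h0.ne').const_mul (-P)
  have l2 := (((hasDerivAt_const x (1:ℝ)).fun_sub hd).log (by linarith : (1:ℝ) - sigmoid x ≠ 0)).const_mul (1 - P)
  have := l1.fun_sub l2
  refine this.congr_deriv ?_
  have e1 : sigmoid x * (1 - sigmoid x) / sigmoid x = 1 - sigmoid x := by
    field_simp
  have e2 : (0 - sigmoid x * (1 - sigmoid x)) / (1 - sigmoid x) = - sigmoid x := by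
    rw [zero_sub, neg_div]
    congr 1
    rw [mul_div_assoc, div_self (by linarith : (1:ℝ) - sigmoid x ≠ 0), mul_one]
  rw [e1, e2]
  ring

/-- **First-order condition of the Elo binary cross-entropy minimization
(Proposition 1 of Balduzzi et al.):** a global minimizer `ε` of the Elo loss
satisfies `∑ k, σ (ε i - ε k) = ∑ k, P̃ i k` for every `i`. -/
theorem elo_first_order_condition
    (n : ℕ) (hn : 1 ≤ n)
    (Pt : Matrix (Fin n) (Fin n) ℝ)
    (hbdd : ∀ i j, Pt i j ∈ Set.Ioo (0 : ℝ) 1)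
    (hsym : ∀ i j, Pt i j + Pt j i = 1)
    (ε : Fin n → ℝ)
    (hmin : ∀ ε' : Fin n → ℝ,
      (∑ i, ∑ j, (-(Pt i j) * Real.log (sigmoid (ε i - ε j))
        - (1 - Pt i j) * Real.log (1 - sigmoid (ε i - ε j)))) ≤
      (∑ i, ∑ j, (-(Pt i j) * Real.log (sigmoid (ε' i - ε' j))
        - (1 - Pt i j) * Real.log (1 - sigmoid (ε' i - ε' j))))) :
    ∀ i, ∑ k, sigmoid (ε i - ε k) = ∑ k, Pt i k := by
  intro i
  set d : Fin n → ℝ := fun j => if j = i then 1 else 0 with hd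
  set A : Fin n → Fin n → ℝ := fun j k => sigmoid (ε j - ε k) - Pt j k with hA
  set f : ℝ → ℝ := fun t => ∑ j, ∑ k,
      (-(Pt j k) * Real.log (sigmoid ((ε j + d j * t) - (ε k + d k * t)))
        - (1 - Pt j k) * Real.log (1 - sigmoid ((ε j + d j * t) - (ε k + d k * t)))) with hf
  have hderiv : HasDerivAt f (∑ j, ∑ k, A j k * (d j - d k)) 0 := by
    apply HasDerivAt.fun_sum
    intro j _
    apply HasDerivAt.fun_sum
    intro k _
    have hlin : HasDerivAt (fun t : ℝ => (ε j + d j * t) - (ε k + d k * t)) (d j - d k) 0 := by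
      simpa using (((hasDerivAt_const (0:ℝ) (ε j)).fun_add ((hasDerivAt_id (0:ℝ)).const_mul (d j))).fun_sub
        (((hasDerivAt_const (0:ℝ) (ε k)).fun_add ((hasDerivAt_id (0:ℝ)).const_mul (d k)))))
    have hcomp := (term_hasDerivAt (Pt j k) ((ε j + d j * 0) - (ε k + d k * 0))).comp 0 hlin
    simpa [hA, mul_comm, Function.comp_def] using hcomp
  have hloc : IsLocalMin f 0 := by
    apply Filter.Eventually.of_forall
    intro t
    have h1 := hmin (fun j => ε j + d j * t)
    simpa [hf] using h1
  have hzero := hloc.hasDerivAt_eq_zero hderiv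
  -- simplify the double sum
  have hAanti : ∀ j k, A j k = - A k j := by
    intro j k
    have hs : sigmoid (ε j - ε k) = 1 - sigmoid (ε k - ε j) := by
      rw [← sigmoid_neg]; ring_nf
    have := hsym j k
    simp only [hA]
    rw [hs]; linarith
  have hsum : ∑ j, ∑ k, A j k * (d j - d k) = 2 * ∑ k, A i k := by
    have e1 : ∑ j, ∑ k, A j k * d j = ∑ k, A i k := by
      rw [Finset.sum_comm]
      simp [hd, mul_ite, Finset.sum_ite_eq']
    have e2 : ∑ j, ∑ k, A j k * d k = - ∑ k, A i k := by
      have : ∀ j, ∑ k, A j k * d k = A j i := by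
        intro j; simp [hd, mul_ite, Finset.sum_ite_eq']
      simp only [this]
      rw [← Finset.sum_neg_distrib]
      exact Finset.sum_congr rfl fun j _ => by rw [hAanti j i]
    calc ∑ j, ∑ k, A j k * (d j - d k)
        = ∑ j, ∑ k, (A j k * d j - A j k * d k) := by
          apply Finset.sum_congr rfl; intro j _; apply Finset.sum_congr rfl; intro k _; ring
      _ = (∑ j, ∑ k, A j k * d j) - ∑ j, ∑ k, A j k * d k := by
          rw [← Finset.sum_sub_distrib]
          exact Finset.sum_congr rfl fun j _ => by rw [Finset.sum_sub_distrib]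
      _ = 2 * ∑ k, A i k := by rw [e1, e2]; ring
  rw [hsum] at hzero
  have : ∑ k, A i k = 0 := by linarith
  have h2 : ∑ k, (sigmoid (ε i - ε k) - Pt i k) = 0 := this
  rw [Finset.sum_sub_distrib] at h2
  linarith
end

section
/- Let n ≥ 2, let P be an n×n real antisymmetric matrix with entries in [−1,1], set P_max := max_{i,j} P_ij, and assume (n−1)·P_max < 1. If ε ∈ ℝⁿ is an Elo rating of P, then for all i,j: |ε_i − ε_j| ≤ 2·arctanh((n−1)·P_max). -/
open Matrix

lemma sigmoid_two_arctanh {M : ℝ} (h0 : -1 < M) (h1 : M < 1) :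
    sigmoid (2 * arctanh M) = (1 + M) / 2 := by
  have hp : (0:ℝ) < 1 + M := by linarith
  have hq : (0:ℝ) < 1 - M := by linarith
  have ht : (0:ℝ) < (1 + M) / (1 - M) := by positivity
  unfold sigmoid arctanh
  have h2 : -(2 * (1 / 2 * Real.log ((1 + M) / (1 - M))))
      = Real.log (((1 + M) / (1 - M))⁻¹) := by
    rw [Real.log_inv]; ring
  rw [h2, Real.exp_log (by positivity)]
  rw [inv_div]
  field_simp
  ring

/-- **Bound on the spread of Elo ratings (from the proof of Theorem 1):**
if `(n-1) Pmax < 1`, then any Elo rating of `P` satisfies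
`|ε i - ε j| ≤ 2 arctanh ((n-1) Pmax)`. -/
theorem elo_rating_spread_bound
    (n : ℕ) (hn : 2 ≤ n)
    (P : Matrix (Fin n) (Fin n) ℝ)
    (hanti : Pᵀ = -P)
    (hbdd : ∀ i j, P i j ∈ Set.Icc (-1 : ℝ) 1)
    (Pmax : ℝ)
    (hPmax : IsGreatest {x : ℝ | ∃ i j, P i j = x} Pmax)
    (hsmall : ((n : ℝ) - 1) * Pmax < 1)
    (ε : Fin n → ℝ)
    (helo : ∀ i, ∑ k, sigmoid (ε i - ε k) = ∑ k, (P i k + 1) / 2) :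
    ∀ i j, |ε i - ε j| ≤ 2 * arctanh (((n : ℝ) - 1) * Pmax) := by
  have hdiag : ∀ k, P k k = 0 := by
    intro k
    have := congrFun (congrFun hanti k) k
    simp [Matrix.transpose_apply] at this
    linarith
  have hPle : ∀ a b, P a b ≤ Pmax := fun a b => hPmax.2 ⟨a, b, rfl⟩
  have hPmax0 : 0 ≤ Pmax := by
    have h := hPle ⟨0, by omega⟩ ⟨0, by omega⟩
    rw [hdiag] at h; exact h
  have hn1 : (1:ℝ) ≤ (n:ℝ) - 1 := by
    have : (2:ℝ) ≤ (n:ℝ) := by exact_mod_cast hn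
    linarith
  set M := ((n:ℝ) - 1) * Pmax with hMdef
  have hM0 : 0 ≤ M := mul_nonneg (by linarith) hPmax0
  have hM1 : M < 1 := hsmall
  haveI : Nonempty (Fin n) := ⟨⟨0, by omega⟩⟩
  obtain ⟨i0, hi0⟩ := Finite.exists_max ε
  obtain ⟨j0, hj0⟩ := Finite.exists_min ε
  have hlow : ∀ k, (1:ℝ)/2 ≤ sigmoid (ε i0 - ε k) := by
    intro k
    have h : sigmoid 0 ≤ sigmoid (ε i0 - ε k) :=
      sigmoid_strictMono.monotone (by linarith [hi0 k])
    have h0 : sigmoid 0 = 1/2 := by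
      unfold sigmoid; norm_num
    linarith [h0 ▸ h]
  have hcard : ((Finset.univ.erase j0).card : ℝ) = (n:ℝ) - 1 := by
    rw [Finset.card_erase_of_mem (Finset.mem_univ j0), Finset.card_univ, Fintype.card_fin]
    have : (1:ℕ) ≤ n := by omega
    push_cast [Nat.cast_sub this]
    ring
  have hcard2 : ((Finset.univ.erase i0).card : ℝ) = (n:ℝ) - 1 := by
    rw [Finset.card_erase_of_mem (Finset.mem_univ i0), Finset.card_univ, Fintype.card_fin]
    have : (1:ℕ) ≤ n := by omega
    push_cast [Nat.cast_sub this]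
    ring
  have hsig : sigmoid (ε i0 - ε j0) ≤ (1 + M) / 2 := by
    have heq := helo i0
    have hsplit1 : ∑ k, sigmoid (ε i0 - ε k)
        = sigmoid (ε i0 - ε j0) + ∑ k ∈ Finset.univ.erase j0, sigmoid (ε i0 - ε k) :=
      (Finset.add_sum_erase _ _ (Finset.mem_univ j0)).symm
    have hsplit2 : ∑ k, (P i0 k + 1) / 2
        = (P i0 i0 + 1) / 2 + ∑ k ∈ Finset.univ.erase i0, (P i0 k + 1) / 2 :=
      (Finset.add_sum_erase _ _ (Finset.mem_univ i0)).symm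
    have h1 : ((n:ℝ) - 1) * (1/2) ≤ ∑ k ∈ Finset.univ.erase j0, sigmoid (ε i0 - ε k) := by
      calc ((n:ℝ) - 1) * (1/2)
          = ∑ _k ∈ Finset.univ.erase j0, (1:ℝ)/2 := by
            rw [Finset.sum_const, nsmul_eq_mul, hcard]
        _ ≤ _ := Finset.sum_le_sum (fun k _ => hlow k)
    have h2 : ∑ k ∈ Finset.univ.erase i0, (P i0 k + 1) / 2
        ≤ ((n:ℝ) - 1) * ((Pmax + 1) / 2) := by
      calc ∑ k ∈ Finset.univ.erase i0, (P i0 k + 1) / 2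
          ≤ ∑ _k ∈ Finset.univ.erase i0, (Pmax + 1) / 2 :=
            Finset.sum_le_sum (fun k _ => by linarith [hPle i0 k])
        _ = ((n:ℝ) - 1) * ((Pmax + 1) / 2) := by
            rw [Finset.sum_const, nsmul_eq_mul, hcard2]
    rw [hsplit1, hsplit2, hdiag] at heq
    have : sigmoid (ε i0 - ε j0) ≤ (0 + 1)/2 + ((n:ℝ) - 1) * ((Pmax + 1)/2)
        - ((n:ℝ) - 1) * (1/2) := by linarith
    rw [hMdef]
    linarith
  have key : ε i0 - ε j0 ≤ 2 * arctanh M := by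
    have hval := sigmoid_two_arctanh (M := M) (by linarith) hM1
    have : sigmoid (ε i0 - ε j0) ≤ sigmoid (2 * arctanh M) := by rw [hval]; exact hsig
    exact sigmoid_strictMono.le_iff_le.mp this
  intro i j
  rw [abs_le]
  constructor
  · have h1 := hj0 i
    have h2 := hi0 j
    linarith
  · have h1 := hi0 i
    have h2 := hj0 j
    linarith
end

section
/- Let n ≥ 2 and let P be an n×n real antisymmetric matrix that is regular and transitive. Set P_max := max_{i,j} P_ij and P_min := min{P_ij : P_ij > 0}. Then for every pair (i,j) with P_ij > 0: (a) for every index k with k ≠ i and k ≠ j, P_ik − P_jk ≥ −(P_max − P_min); and (b) ∑_{k=1}^n (P_ik − P_jk) ≥ n·P_min − (n−2)·P_max. -/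
open Matrix

/-- **Pointwise and summed payoff-difference bounds for regular transitive games
(from the proof of Theorem 1).** -/
theorem transitive_payoff_difference_bounds
    (n : ℕ) (hn : 2 ≤ n)
    (P : Matrix (Fin n) (Fin n) ℝ)
    (hanti : Pᵀ = -P)
    (hreg : ∀ i j, i ≠ j → P i j ≠ 0)
    (htrans : ∀ i j k, 0 < P i j → 0 < P j k → 0 < P i k)
    (Pmax Pmin : ℝ)
    (hPmax : IsGreatest {x : ℝ | ∃ i j, P i j = x} Pmax)
    (hPmin : IsLeast {x : ℝ | ∃ i j, P i j = x ∧ 0 < x} Pmin) :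
    ∀ i j, 0 < P i j →
      (∀ k, k ≠ i → k ≠ j → -(Pmax - Pmin) ≤ P i k - P j k) ∧
      ((n : ℝ) * Pmin - ((n : ℝ) - 2) * Pmax ≤ ∑ k, (P i k - P j k)) := by
  have hswap : ∀ i j, P j i = -P i j := by
    intro i j
    have := congrFun (congrFun hanti i) j
    simpa [Matrix.transpose_apply] using this
  have hdiag : ∀ i, P i i = 0 := by
    intro i; have := hswap i i; linarith
  have hmax : ∀ i j, P i j ≤ Pmax := fun i j => hPmax.2 ⟨i, j, rfl⟩
  have hmin : ∀ i j, 0 < P i j → Pmin ≤ P i j := fun i j h => hPmin.2 ⟨i, j, rfl, h⟩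
  intro i j hij
  have hine : i ≠ j := by
    rintro rfl; rw [hdiag] at hij; exact lt_irrefl _ hij
  have hptw : ∀ k, k ≠ i → k ≠ j → -(Pmax - Pmin) ≤ P i k - P j k := by
    intro k hki hkj
    rcases lt_or_gt_of_ne (hreg j k (Ne.symm hkj)) with hjk | hjk
    · -- P j k < 0, so P k j > 0
      have hkj' : 0 < P k j := by have := hswap k j; linarith
      rcases lt_or_gt_of_ne (hreg i k (Ne.symm hki)) with hik | hik
      · -- both negative
        have hki' : 0 < P k i := by have := hswap k i; linarith
        have h1 := hmin k j hkj'
        have h2 := hmax k i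
        have e1 := hswap i k
        have e2 := hswap j k
        linarith
      · -- P i k > 0 > P j k
        have h3 := hmax i j
        have h4 := hmin i j hij
        linarith
    · -- P j k > 0, so P i k > 0 by transitivity
      have hik : 0 < P i k := htrans i j k hij hjk
      have h1 := hmin i k hik
      have h2 := hmax j k
      linarith
  refine ⟨hptw, ?_⟩
  set c : ℝ := Pmin - Pmax with hc
  have hsub : ({i, j} : Finset (Fin n)) ⊆ Finset.univ := Finset.subset_univ _
  have hnonneg : ∀ k ∈ Finset.univ, k ∉ ({i, j} : Finset (Fin n)) →
      0 ≤ (P i k - P j k) - c := by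
    intro k _ hk
    simp only [Finset.mem_insert, Finset.mem_singleton, not_or] at hk
    have := hptw k hk.1 hk.2
    simp only [hc]; linarith
  have hbig : ∑ k ∈ ({i, j} : Finset (Fin n)), ((P i k - P j k) - c) ≤
      ∑ k, ((P i k - P j k) - c) :=
    Finset.sum_le_sum_of_subset_of_nonneg hsub hnonneg
  rw [Finset.sum_pair hine] at hbig
  have hval : (P i i - P j i - c) + (P i j - P j j - c) = 2 * P i j - 2 * c := by
    rw [hdiag, hdiag, hswap j i]; ring
  have h4 := hmin i j hij
  have expand : ∑ k, ((P i k - P j k) - c) = (∑ k, (P i k - P j k)) - n * c := by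
    rw [Finset.sum_sub_distrib, Finset.sum_const, Finset.card_univ, Fintype.card_fin,
      nsmul_eq_mul]
  rw [expand, hval] at hbig
  simp only [hc] at hbig ⊢
  linarith
end
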